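/- arXiv:dg-ga/9707023 — 7 statements merged into one kernel-verified Lean document; each statement's English description precedes it below -/
import Mathlib

section
/- Let V be a finite-dimensional real symplectic vector space, K a subspace, and R, N symplectic vector spaces such that V is the symplectic direct sum R ⊕ (K ⊕ K*) ⊕ N, where K ⊕ K* carries the canonical symplectic pairing. If N⊥ is any linear complement to N in K* ⊕ N, then R ⊕ K ⊕ N⊥ is a symplectic subspace of V. -/
open Module

/-!
Write `v ∈ R ⊕ K ⊕ N⊥` as `(r, k, 0, 0) + p` with `p ∈ N⊥`. Pairing `v` with `R` gives `r = 0`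
by nondegeneracy of `ωR`; pairing with `K` kills the `K*`-component of `p`, hence `p = 0` because
`N⊥ ∩ N = 0`. What is left is `(0, k, 0, 0)`, and since `N⊥` projects onto `K*`, pairing with `N⊥`
tests `k` against every functional, so `k = 0`.
-/

namespace SymplecticSum

variable {𝕜 R K N : Type*} [CommRing 𝕜] [AddCommGroup R] [Module 𝕜 R]
  [AddCommGroup K] [Module 𝕜 K] [AddCommGroup N] [Module 𝕜 N]
  {ωR : R →ₗ[𝕜] R →ₗ[𝕜] 𝕜} {ωN : N →ₗ[𝕜] N →ₗ[𝕜] 𝕜}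
  {ω : (R × (K × Dual 𝕜 K) × N) → (R × (K × Dual 𝕜 K) × N) → 𝕜}

theorem form_apply_inR
    (hω : ∀ v w : R × (K × Dual 𝕜 K) × N,
      ω v w = ωR v.1 w.1 + (w.2.1.2 v.2.1.1 - v.2.1.2 w.2.1.1) + ωN v.2.2 w.2.2)
    (v : R × (K × Dual 𝕜 K) × N) (r : R) :
    ω v (r, (0, 0), 0) = ωR v.1 r := by
  simp [hω]

theorem form_apply_inK
    (hω : ∀ v w : R × (K × Dual 𝕜 K) × N,
      ω v w = ωR v.1 w.1 + (w.2.1.2 v.2.1.1 - v.2.1.2 w.2.1.1) + ωN v.2.2 w.2.2)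
    (v : R × (K × Dual 𝕜 K) × N) (k : K) :
    ω v (0, (k, 0), 0) = -v.2.1.2 k := by
  simp [hω]

theorem form_apply_of_mem_K
    (hω : ∀ v w : R × (K × Dual 𝕜 K) × N,
      ω v w = ωR v.1 w.1 + (w.2.1.2 v.2.1.1 - v.2.1.2 w.2.1.1) + ωN v.2.2 w.2.2)
    {v : R × (K × Dual 𝕜 K) × N} (hr : v.1 = 0) (hf : v.2.1.2 = 0) (hn : v.2.2 = 0)
    (w : R × (K × Dual 𝕜 K) × N) :
    ω v w = w.2.1.2 v.2.1.1 := by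
  simp [hω, hr, hf, hn]

theorem exists_mem_dualComponent_eq {P : Submodule 𝕜 (R × (K × Dual 𝕜 K) × N)}
    (hspan : ∀ v : R × (K × Dual 𝕜 K) × N, v.1 = 0 → v.2.1.1 = 0 →
      ∃ p ∈ P, ∃ n : N, v = p + (0, (0, 0), n))
    (g : Dual 𝕜 K) : ∃ q ∈ P, q.2.1.2 = g := by
  obtain ⟨q, hq, n, h⟩ := hspan (0, (0, g), 0) rfl rfl
  exact ⟨q, hq, by simpa using congrArg (fun x => x.2.1.2) h.symm⟩

end SymplecticSum

open SymplecticSum in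
theorem symplectic_complement_is_symplectic_subspace_general
    (R K N : Type*)
    [AddCommGroup R] [Module ℝ R] [AddCommGroup K] [Module ℝ K]
    [AddCommGroup N] [Module ℝ N]
    (ωR : R →ₗ[ℝ] R →ₗ[ℝ] ℝ) (ωN : N →ₗ[ℝ] N →ₗ[ℝ] ℝ)
    (hRnd : ∀ r, (∀ r', ωR r r' = 0) → r = 0)
    -- the symplectic form on V = R × (K × K*) × N
    (ω : (R × (K × Dual ℝ K) × N) → (R × (K × Dual ℝ K) × N) → ℝ)
    (hω : ∀ v w : R × (K × Dual ℝ K) × N,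
      ω v w = ωR v.1 w.1 + (w.2.1.2 v.2.1.1 - v.2.1.2 w.2.1.1) + ωN v.2.2 w.2.2)
    -- N⊥ : a subspace of K* ⊕ N complementary to N
    (Nperp : Submodule ℝ (R × (K × Dual ℝ K) × N))
    (hNperpInd : ∀ p ∈ Nperp, p.2.1.2 = 0 → p = 0)
    (hNperpSpan : ∀ v : R × (K × Dual ℝ K) × N, v.1 = 0 → v.2.1.1 = 0 →
      ∃ p ∈ Nperp, ∃ n : N, v = p + (0, (0, 0), n)) :
    -- R ⊕ K ⊕ N⊥ is a symplectic subspace: the restriction of ω to it is nondegenerate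
    ∀ v : R × (K × Dual ℝ K) × N,
      (∃ p ∈ Nperp, (v - p).2.1.2 = 0 ∧ (v - p).2.2 = 0) →
      (∀ w : R × (K × Dual ℝ K) × N,
        (∃ q ∈ Nperp, (w - q).2.1.2 = 0 ∧ (w - q).2.2 = 0) → ω v w = 0) →
      v = 0 := by
  rintro v ⟨p, hp, hpf, hpn⟩ hv
  have hr : v.1 = 0 := hRnd _ fun r => by
    rw [← form_apply_inR hω]
    exact hv _ ⟨0, Nperp.zero_mem, by simp, by simp⟩
  have hf : v.2.1.2 = 0 := LinearMap.ext fun k => neg_eq_zero.mp <| by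
    rw [← form_apply_inK hω]
    exact hv _ ⟨0, Nperp.zero_mem, by simp, by simp⟩
  have hp0 : p = 0 := hNperpInd p hp (by simpa [hf] using hpf)
  have hn : v.2.2 = 0 := by simpa [hp0] using hpn
  have hk : v.2.1.1 = 0 := (forall_dual_apply_eq_zero_iff ℝ _).mp fun g => by
    obtain ⟨q, hq, rfl⟩ := exists_mem_dualComponent_eq hNperpSpan g
    rw [← form_apply_of_mem_K hω hr hf hn]
    exact hv q ⟨q, hq, by simp, by simp⟩
  exact Prod.ext hr (Prod.ext (Prod.ext hk hf) hn)

/-- Let `V = R ⊕ (K ⊕ K*) ⊕ N` be a symplectic direct sum, where `K ⊕ K*`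
carries the canonical symplectic pairing and `R`, `N` are symplectic.  If `N⊥` is any linear
complement to `N` inside `K* ⊕ N`, then `R ⊕ K ⊕ N⊥` is a symplectic subspace of `V`. -/
theorem symplectic_complement_is_symplectic_subspace
    (R K N : Type*)
    [AddCommGroup R] [Module ℝ R] [AddCommGroup K] [Module ℝ K]
    [AddCommGroup N] [Module ℝ N]
    [FiniteDimensional ℝ R] [FiniteDimensional ℝ K] [FiniteDimensional ℝ N]
    (ωR : R →ₗ[ℝ] R →ₗ[ℝ] ℝ) (ωN : N →ₗ[ℝ] N →ₗ[ℝ] ℝ)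
    (hRalt : ∀ r, ωR r r = 0) (hNalt : ∀ n, ωN n n = 0)
    (hRnd : ∀ r, (∀ r', ωR r r' = 0) → r = 0)
    (hNnd : ∀ n, (∀ n', ωN n n' = 0) → n = 0)
    -- the symplectic form on V = R × (K × K*) × N
    (ω : (R × (K × Dual ℝ K) × N) → (R × (K × Dual ℝ K) × N) → ℝ)
    (hω : ∀ v w : R × (K × Dual ℝ K) × N,
      ω v w = ωR v.1 w.1 + (w.2.1.2 v.2.1.1 - v.2.1.2 w.2.1.1) + ωN v.2.2 w.2.2)
    -- N⊥ : a subspace of K* ⊕ N complementary to N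
    (Nperp : Submodule ℝ (R × (K × Dual ℝ K) × N))
    (hNperpSub : ∀ p ∈ Nperp, p.1 = 0 ∧ p.2.1.1 = 0)
    (hNperpInd : ∀ p ∈ Nperp, p.2.1.2 = 0 → p = 0)
    (hNperpSpan : ∀ v : R × (K × Dual ℝ K) × N, v.1 = 0 → v.2.1.1 = 0 →
      ∃ p ∈ Nperp, ∃ n : N, v = p + (0, (0, 0), n)) :
    -- R ⊕ K ⊕ N⊥ is a symplectic subspace: the restriction of ω to it is nondegenerate
    ∀ v : R × (K × Dual ℝ K) × N,
      (∃ p ∈ Nperp, (v - p).2.1.2 = 0 ∧ (v - p).2.2 = 0) →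
      (∀ w : R × (K × Dual ℝ K) × N,
        (∃ q ∈ Nperp, (w - q).2.1.2 = 0 ∧ (w - q).2.2 = 0) → ω v w = 0) →
      v = 0 :=
  symplectic_complement_is_symplectic_subspace_general R K N ωR ωN hRnd ω hω Nperp hNperpInd
    hNperpSpan
end

section
/- With V = R ⊕ (K ⊕ K*) ⊕ N a symplectic direct sum as above and N⊥ a complement to N in K* ⊕ N, let P : V → N be the linear projection with kernel R ⊕ K ⊕ N⊥. Then the restriction of P to the symplectic orthogonal complement (R ⊕ K ⊕ N⊥)^ω is a symplectic isomorphism onto N. -/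
/-!
A vector `v` of `W^ω`, `W = R ⊕ K ⊕ N⊥`, pairs to zero with `R` and with `K`, so by
nondegeneracy of `ωR` and of the canonical pairing it has no `R`- and no `K*`-component;
on such vectors `P` is the `N`-coordinate, whence `P` intertwines the forms on `W^ω`.
Pairing `v = (0, k, 0, n)` with `N⊥` and identifying `N⊥ ≅ K*` through the `K*`-coordinate
shows that the equations `ω v q = 0` (`q ∈ N⊥`) say that `k` evaluates a prescribed linear
functional on `K*`; since `K` is finite dimensional, `K ≅ K**` gives exactly one such `k`.
-/

open Module

theorem Module.existsUnique_forall_apply_eq {𝕜 K M : Type*} [Field 𝕜]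
    [AddCommGroup K] [Module 𝕜 K] [FiniteDimensional 𝕜 K] [AddCommMonoid M] [Module 𝕜 M]
    (e : M ≃ₗ[𝕜] Dual 𝕜 K) (g : M →ₗ[𝕜] 𝕜) : ∃! k : K, ∀ m, e m k = g m := by
  refine ⟨(evalEquiv 𝕜 K).symm (g ∘ₗ e.symm), fun m => ?_, fun k hk => ?_⟩
  · simp [apply_evalEquiv_symm_apply]
  · apply (evalEquiv 𝕜 K).injective
    ext ψ
    simpa [apply_evalEquiv_symm_apply] using hk (e.symm ψ)

namespace SymplecticSplitting

variable {𝕜 R K N : Type*} [Field 𝕜] [AddCommGroup R] [Module 𝕜 R] [AddCommGroup K]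
  [Module 𝕜 K] [AddCommGroup N] [Module 𝕜 N]

local notation "V" => R × (K × Dual 𝕜 K) × N

def form (ωR : R →ₗ[𝕜] R →ₗ[𝕜] 𝕜) (ωN : N →ₗ[𝕜] N →ₗ[𝕜] 𝕜) (v w : V) : 𝕜 :=
  ωR v.1 w.1 + (w.2.1.2 v.2.1.1 - v.2.1.2 w.2.1.1) + ωN v.2.2 w.2.2

/-- The subspace `R ⊕ K ⊕ N⊥`. -/
def rkSum (Nperp : Submodule 𝕜 V) : Set V :=
  {w | ∃ q ∈ Nperp, (w - q).2.1.2 = 0 ∧ (w - q).2.2 = 0}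

def symplecticPerp (ω : V → V → 𝕜) (S : Set V) : Set V :=
  {v | ∀ w ∈ S, ω v w = 0}

variable {ωR : R →ₗ[𝕜] R →ₗ[𝕜] 𝕜} {ωN : N →ₗ[𝕜] N →ₗ[𝕜] 𝕜}
  {Nperp : Submodule 𝕜 (R × (K × Dual 𝕜 K) × N)}

theorem mk_mem_rkSum (r : R) (k : K) : ((r, (k, 0), 0) : V) ∈ rkSum Nperp :=
  ⟨0, Nperp.zero_mem, by simp, by simp⟩

theorem mem_rkSum_of_mem {q : V} (hq : q ∈ Nperp) : q ∈ rkSum Nperp :=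
  ⟨q, hq, by simp, by simp⟩

theorem form_of_fst_eq_zero_of_dual_eq_zero {v : V} (h₁ : v.1 = 0) (h₂ : v.2.1.2 = 0) (w : V) :
    form ωR ωN v w = w.2.1.2 v.2.1.1 + ωN v.2.2 w.2.2 := by
  simp [form, h₁, h₂]

theorem fst_eq_zero_and_dual_eq_zero_of_mem_symplecticPerp
    (hRnd : ∀ r, (∀ r', ωR r r' = 0) → r = 0) {v : V}
    (hv : v ∈ symplecticPerp (form ωR ωN) (rkSum Nperp)) : v.1 = 0 ∧ v.2.1.2 = 0 := by
  refine ⟨hRnd _ fun r' => ?_, LinearMap.ext fun k' => ?_⟩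
  · simpa [form] using hv _ (mk_mem_rkSum r' 0)
  · simpa [form] using hv _ (mk_mem_rkSum 0 k')

theorem mem_symplecticPerp_rkSum_iff (hRnd : ∀ r, (∀ r', ωR r r' = 0) → r = 0) {v : V} :
    v ∈ symplecticPerp (form ωR ωN) (rkSum Nperp) ↔
      v.1 = 0 ∧ v.2.1.2 = 0 ∧ ∀ q ∈ Nperp, q.2.1.2 v.2.1.1 + ωN v.2.2 q.2.2 = 0 := by
  constructor
  · intro hv
    obtain ⟨h₁, h₂⟩ := fst_eq_zero_and_dual_eq_zero_of_mem_symplecticPerp hRnd hv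
    refine ⟨h₁, h₂, fun q hq => ?_⟩
    rw [← form_of_fst_eq_zero_of_dual_eq_zero h₁ h₂]
    exact hv q (mem_rkSum_of_mem hq)
  · rintro ⟨h₁, h₂, hq⟩ w ⟨q, hqN, hw₁, hw₂⟩
    simp only [Prod.snd_sub, Prod.fst_sub, sub_eq_zero] at hw₁ hw₂
    rw [form_of_fst_eq_zero_of_dual_eq_zero h₁ h₂, hw₁, hw₂]
    exact hq q hqN

theorem proj_apply_of_fst_eq_zero_of_dual_eq_zero
    (hNperpInd : ∀ p ∈ Nperp, p.2.1.2 = 0 → p = 0) (P : V →ₗ[𝕜] N)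
    (hPdecomp : ∀ v : V, ∃ p ∈ Nperp, ((v - (0, (0, 0), P v)) - p).2.1.2 = 0 ∧
      ((v - (0, (0, 0), P v)) - p).2.2 = 0)
    (hPker : ∀ v, v ∈ rkSum Nperp → P v = 0) (v : V) (h₁ : v.1 = 0) (h₂ : v.2.1.2 = 0) :
    P v = v.2.2 := by
  have hP_N : ∀ n : N, P (0, (0, 0), n) = n := fun n => by
    obtain ⟨p, hp, hp₁, hp₂⟩ := hPdecomp (0, (0, 0), n)
    obtain rfl : p = 0 := hNperpInd p hp (by simpa using hp₁)
    exact (sub_eq_zero.1 (by simpa using hp₂)).symm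
  have hv : v = (v.1, (v.2.1.1, 0), 0) + (0, (0, 0), v.2.2) := by
    ext <;> simp [h₁, h₂]
  rw [congrArg P hv, map_add, hPker _ (mk_mem_rkSum _ _), hP_N, zero_add]

noncomputable def dualCoordEquiv (hNperpInd : ∀ p ∈ Nperp, p.2.1.2 = 0 → p = 0)
    (hNperpSpan : ∀ v : V, v.1 = 0 → v.2.1.1 = 0 → ∃ p ∈ Nperp, ∃ n : N, v = p + (0, (0, 0), n)) :
    Nperp ≃ₗ[𝕜] Dual 𝕜 K :=
  LinearEquiv.ofBijective
    (LinearMap.snd 𝕜 K (Dual 𝕜 K) ∘ₗ LinearMap.fst 𝕜 _ N ∘ₗ LinearMap.snd 𝕜 R _ ∘ₗ Nperp.subtype)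
    ⟨(injective_iff_map_eq_zero _).2 fun q hq => Subtype.ext (hNperpInd q q.2 hq), fun ψ => by
      obtain ⟨p, hp, n, hpn⟩ := hNperpSpan (0, (0, ψ), 0) rfl rfl
      exact ⟨⟨p, hp⟩, by simpa using (congrArg (·.2.1.2) hpn).symm⟩⟩

theorem dualCoordEquiv_apply (hNperpInd : ∀ p ∈ Nperp, p.2.1.2 = 0 → p = 0)
    (hNperpSpan : ∀ v : V, v.1 = 0 → v.2.1.1 = 0 → ∃ p ∈ Nperp, ∃ n : N, v = p + (0, (0, 0), n))
    (q : Nperp) : dualCoordEquiv hNperpInd hNperpSpan q = (q : V).2.1.2 :=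
  rfl

end SymplecticSplitting

open SymplecticSplitting in
theorem projection_of_symplectic_perp_is_symplectic_iso_general
    (R K N : Type*)
    [AddCommGroup R] [Module ℝ R] [AddCommGroup K] [Module ℝ K]
    [AddCommGroup N] [Module ℝ N]
    [FiniteDimensional ℝ K]
    (ωR : R →ₗ[ℝ] R →ₗ[ℝ] ℝ) (ωN : N →ₗ[ℝ] N →ₗ[ℝ] ℝ)
    (hRnd : ∀ r, (∀ r', ωR r r' = 0) → r = 0)
    (ω : (R × (K × Dual ℝ K) × N) → (R × (K × Dual ℝ K) × N) → ℝ)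
    (hω : ∀ v w : R × (K × Dual ℝ K) × N,
      ω v w = ωR v.1 w.1 + (w.2.1.2 v.2.1.1 - v.2.1.2 w.2.1.1) + ωN v.2.2 w.2.2)
    (Nperp : Submodule ℝ (R × (K × Dual ℝ K) × N))
    (hNperpInd : ∀ p ∈ Nperp, p.2.1.2 = 0 → p = 0)
    (hNperpSpan : ∀ v : R × (K × Dual ℝ K) × N, v.1 = 0 → v.2.1.1 = 0 →
      ∃ p ∈ Nperp, ∃ n : N, v = p + (0, (0, 0), n))
    -- the projection P : V → N with kernel W = R ⊕ K ⊕ N⊥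
    (P : (R × (K × Dual ℝ K) × N) →ₗ[ℝ] N)
    (hPdecomp : ∀ v : R × (K × Dual ℝ K) × N,
      ∃ p ∈ Nperp, ((v - (0, (0, 0), P v)) - p).2.1.2 = 0 ∧
        ((v - (0, (0, 0), P v)) - p).2.2 = 0)
    (hPker : ∀ v : R × (K × Dual ℝ K) × N,
      (∃ p ∈ Nperp, (v - p).2.1.2 = 0 ∧ (v - p).2.2 = 0) → P v = 0) :
    -- P restricted to W^ω intertwines the symplectic forms and is a bijection onto N
    (∀ v v' : R × (K × Dual ℝ K) × N,
      (∀ w, (∃ q ∈ Nperp, (w - q).2.1.2 = 0 ∧ (w - q).2.2 = 0) → ω v w = 0) →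
      (∀ w, (∃ q ∈ Nperp, (w - q).2.1.2 = 0 ∧ (w - q).2.2 = 0) → ω v' w = 0) →
      ωN (P v) (P v') = ω v v')
    ∧ (∀ n : N, ∃! v : R × (K × Dual ℝ K) × N,
        (∀ w, (∃ q ∈ Nperp, (w - q).2.1.2 = 0 ∧ (w - q).2.2 = 0) → ω v w = 0) ∧ P v = n) := by
  obtain rfl : ω = form ωR ωN := funext fun v => funext (hω v)
  have hPv := proj_apply_of_fst_eq_zero_of_dual_eq_zero hNperpInd P hPdecomp hPker
  refine ⟨fun v v' hv hv' => ?_, fun n => ?_⟩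
  · obtain ⟨h₁, h₂, -⟩ := (mem_symplecticPerp_rkSum_iff hRnd).1 hv
    obtain ⟨h₁', h₂', -⟩ := (mem_symplecticPerp_rkSum_iff hRnd).1 hv'
    rw [hPv _ h₁ h₂, hPv _ h₁' h₂', form_of_fst_eq_zero_of_dual_eq_zero h₁ h₂, h₂', LinearMap.zero_apply, zero_add]
  · obtain ⟨k, hk, hk_unique⟩ := existsUnique_forall_apply_eq
      (dualCoordEquiv hNperpInd hNperpSpan)
      (-(ωN n ∘ₗ LinearMap.snd ℝ _ N ∘ₗ LinearMap.snd ℝ R _ ∘ₗ Nperp.subtype))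
    have hk' : ∀ k' : K, (∀ q ∈ Nperp, q.2.1.2 k' + ωN n q.2.2 = 0) ↔ k' = k := fun k' => by
      refine ⟨fun h => hk_unique k' fun q => eq_neg_of_add_eq_zero_left (h q q.2), ?_⟩
      rintro rfl q hq
      simpa [dualCoordEquiv_apply, eq_neg_iff_add_eq_zero] using hk ⟨q, hq⟩
    refine ⟨(0, (k, 0), n), ⟨(mem_symplecticPerp_rkSum_iff hRnd).2 ⟨rfl, rfl, (hk' k).2 rfl⟩,
      hPv _ rfl rfl⟩, fun v ⟨hv, hvn⟩ => ?_⟩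
    obtain ⟨h₁, h₂, hq⟩ := (mem_symplecticPerp_rkSum_iff hRnd).1 hv
    rw [hPv _ h₁ h₂] at hvn
    subst hvn
    exact Prod.ext h₁ (Prod.ext (Prod.ext ((hk' _).1 hq) h₂) rfl)

/-- With `V = R ⊕ (K ⊕ K*) ⊕ N` a symplectic direct sum and `N⊥` a complement
to `N` in `K* ⊕ N`, let `P : V → N` be the linear projection with kernel `W = R ⊕ K ⊕ N⊥`.
Then the restriction of `P` to the symplectic orthogonal complement `W^ω` is a symplectic
isomorphism onto `N`. -/
theorem projection_of_symplectic_perp_is_symplectic_iso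
    (R K N : Type*)
    [AddCommGroup R] [Module ℝ R] [AddCommGroup K] [Module ℝ K]
    [AddCommGroup N] [Module ℝ N]
    [FiniteDimensional ℝ R] [FiniteDimensional ℝ K] [FiniteDimensional ℝ N]
    (ωR : R →ₗ[ℝ] R →ₗ[ℝ] ℝ) (ωN : N →ₗ[ℝ] N →ₗ[ℝ] ℝ)
    (hRalt : ∀ r, ωR r r = 0) (hNalt : ∀ n, ωN n n = 0)
    (hRnd : ∀ r, (∀ r', ωR r r' = 0) → r = 0)
    (hNnd : ∀ n, (∀ n', ωN n n' = 0) → n = 0)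
    (ω : (R × (K × Dual ℝ K) × N) → (R × (K × Dual ℝ K) × N) → ℝ)
    (hω : ∀ v w : R × (K × Dual ℝ K) × N,
      ω v w = ωR v.1 w.1 + (w.2.1.2 v.2.1.1 - v.2.1.2 w.2.1.1) + ωN v.2.2 w.2.2)
    (Nperp : Submodule ℝ (R × (K × Dual ℝ K) × N))
    (hNperpSub : ∀ p ∈ Nperp, p.1 = 0 ∧ p.2.1.1 = 0)
    (hNperpInd : ∀ p ∈ Nperp, p.2.1.2 = 0 → p = 0)
    (hNperpSpan : ∀ v : R × (K × Dual ℝ K) × N, v.1 = 0 → v.2.1.1 = 0 →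
      ∃ p ∈ Nperp, ∃ n : N, v = p + (0, (0, 0), n))
    -- the projection P : V → N with kernel W = R ⊕ K ⊕ N⊥
    (P : (R × (K × Dual ℝ K) × N) →ₗ[ℝ] N)
    (hPdecomp : ∀ v : R × (K × Dual ℝ K) × N,
      ∃ p ∈ Nperp, ((v - (0, (0, 0), P v)) - p).2.1.2 = 0 ∧
        ((v - (0, (0, 0), P v)) - p).2.2 = 0)
    (hPker : ∀ v : R × (K × Dual ℝ K) × N,
      (∃ p ∈ Nperp, (v - p).2.1.2 = 0 ∧ (v - p).2.2 = 0) → P v = 0) :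
    -- P restricted to W^ω intertwines the symplectic forms and is a bijection onto N
    (∀ v v' : R × (K × Dual ℝ K) × N,
      (∀ w, (∃ q ∈ Nperp, (w - q).2.1.2 = 0 ∧ (w - q).2.2 = 0) → ω v w = 0) →
      (∀ w, (∃ q ∈ Nperp, (w - q).2.1.2 = 0 ∧ (w - q).2.2 = 0) → ω v' w = 0) →
      ωN (P v) (P v') = ω v v')
    ∧ (∀ n : N, ∃! v : R × (K × Dual ℝ K) × N,
        (∀ w, (∃ q ∈ Nperp, (w - q).2.1.2 = 0 ∧ (w - q).2.2 = 0) → ω v w = 0) ∧ P v = n) :=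
  projection_of_symplectic_perp_is_symplectic_iso_general R K N ωR ωN hRnd ω hω Nperp hNperpInd
    hNperpSpan P hPdecomp hPker
end

section
/- Let λ be a dominant weight of a compact connected Lie group G lying in the open wall σ, and suppose λ − ρ is regular. Then w_σ(λ − ρ) = λ + 2ρ_σ − ρ is dominant regular. -/
open scoped Classical
open Finset

noncomputable section AuxRoot

variable {E : Type*} [NormedAddCommGroup E] [InnerProductSpace ℝ E]

/-- coroot pairing `⟨x, y∨⟩`. -/
def pr (x y : E) : ℝ := 2 * (inner ℝ x y : ℝ) / (inner ℝ y y : ℝ)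

lemma pr_add_left (x z y : E) : pr (x + z) y = pr x y + pr z y := by
  simp [pr, inner_add_left, mul_add, add_div]

lemma pr_sub_left (x z y : E) : pr (x - z) y = pr x y - pr z y := by
  simp [pr, inner_sub_left, mul_sub, sub_div]

lemma pr_smul_left (c : ℝ) (x y : E) : pr (c • x) y = c * pr x y := by
  simp [pr, real_inner_smul_left]; ring

lemma pr_neg_left (x y : E) : pr (-x) y = - pr x y := by
  simp [pr, neg_div]

lemma inner_self_pos' {x : E} (hx : x ≠ 0) : 0 < (inner ℝ x x : ℝ) := by
  have h1 : (0:ℝ) ≤ inner ℝ x x := real_inner_self_nonneg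
  rcases h1.lt_or_eq with h | h
  · exact h
  · exact absurd ((@inner_self_eq_zero ℝ _ _ _ _ x).1 h.symm) hx

lemma pr_self {x : E} (hx : x ≠ 0) : pr x x = 2 := by
  have := inner_self_pos' hx
  unfold pr; rw [mul_div_assoc, div_self this.ne', mul_one]

lemma inner_eq_pr_mul {x y : E} (hy : y ≠ 0) :
    (inner ℝ x y : ℝ) = pr x y * (inner ℝ y y : ℝ) / 2 := by
  have := inner_self_pos' hy
  unfold pr; rw [div_mul_cancel₀ _ this.ne']; ring

/-- Strict Cauchy–Schwarz for non-proportional vectors. -/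
lemma strict_cs {x y : E} (hy : y ≠ 0) (hind : ∀ c : ℝ, x ≠ c • y) :
    (inner ℝ x y : ℝ) * (inner ℝ x y : ℝ) < (inner ℝ x x : ℝ) * (inner ℝ y y : ℝ) := by
  have hq : (0:ℝ) < inner ℝ y y := inner_self_pos' hy
  set c : ℝ := (inner ℝ x y : ℝ) / (inner ℝ y y : ℝ) with hc
  have hz : x - c • y ≠ 0 := by
    intro h
    exact hind c (by rw [← sub_eq_zero]; exact h)
  have hzz : (0:ℝ) < inner ℝ (x - c • y) (x - c • y) := inner_self_pos' hz
  have hexp : (inner ℝ (x - c • y) (x - c • y) : ℝ)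
      = inner ℝ x x - 2 * c * inner ℝ x y + c ^ 2 * inner ℝ y y := by
    simp only [inner_sub_left, inner_sub_right, real_inner_smul_left, real_inner_smul_right,
      real_inner_comm x y]
    ring
  rw [hexp] at hzz
  have : c * (inner ℝ y y : ℝ) = inner ℝ x y := by rw [hc, div_mul_cancel₀ _ hq.ne']
  nlinarith [hzz, hq]

end AuxRoot
/-- Bundled abstract root-system data. -/
structure RSys (E : Type*) [NormedAddCommGroup E] [InnerProductSpace ℝ E] where
  Φ : Finset E
  P : Finset E
  f : E
  h0 : (0 : E) ∉ Φ
  hdecomp : ∀ α : E, α ∈ Φ ↔ (α ∈ P ∨ -α ∈ P)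
  hposneg : ∀ α ∈ P, -α ∉ P
  hf : ∀ α ∈ Φ, (α ∈ P ↔ 0 < (inner ℝ α f : ℝ))
  hrefl : ∀ α ∈ Φ, ∀ β ∈ Φ, β - (2 * (inner ℝ β α : ℝ) / (inner ℝ α α : ℝ)) • α ∈ Φ
  hcrys : ∀ α ∈ Φ, ∀ β ∈ Φ, ∃ m : ℤ, 2 * (inner ℝ β α : ℝ) / (inner ℝ α α : ℝ) = (m : ℝ)
  hred : ∀ α ∈ Φ, ∀ c : ℝ, c • α ∈ Φ → c = 1 ∨ c = -1

namespace RSys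

variable {E : Type*} [NormedAddCommGroup E] [InnerProductSpace ℝ E] (R : RSys E)

lemma memΦ {α : E} (h : α ∈ R.P) : α ∈ R.Φ := (R.hdecomp α).2 (Or.inl h)

lemma ne_zero {α : E} (h : α ∈ R.Φ) : α ≠ 0 := fun h' => R.h0 (h' ▸ h)

lemma norm2_pos {α : E} (h : α ∈ R.Φ) : 0 < (inner ℝ α α : ℝ) := inner_self_pos' (R.ne_zero h)

lemma neg_memΦ {α : E} (h : α ∈ R.Φ) : -α ∈ R.Φ := by
  rcases (R.hdecomp α).1 h with h' | h'
  · exact (R.hdecomp (-α)).2 (Or.inr (by simpa using h'))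
  · exact (R.hdecomp (-α)).2 (Or.inl h')

lemma fpos {α : E} (h : α ∈ R.P) : 0 < (inner ℝ α R.f : ℝ) := (R.hf α (R.memΦ h)).1 h

lemma trichot {α : E} (h : α ∈ R.Φ) (h2 : α ∉ R.P) : -α ∈ R.P := by
  rcases (R.hdecomp α).1 h with h' | h'
  · exact absurd h' h2
  · exact h'

lemma pr_int {x y : E} (hx : x ∈ R.Φ) (hy : y ∈ R.Φ) : ∃ m : ℤ, pr x y = (m : ℝ) :=
  R.hcrys y hy x hx

lemma refl_mem {x y : E} (hx : x ∈ R.Φ) (hy : y ∈ R.Φ) : x - pr x y • y ∈ R.Φ :=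
  R.hrefl y hy x hx

lemma indep {x y : E} (hx : x ∈ R.Φ) (hy : y ∈ R.Φ) (h1 : x ≠ y) (h2 : x ≠ -y) :
    ∀ c : ℝ, x ≠ c • y := by
  intro c hc
  rcases R.hred y hy c (hc ▸ hx) with h | h
  · exact h1 (by rw [hc, h, one_smul])
  · exact h2 (by rw [hc, h, neg_one_smul])

lemma prod_lt_four {x y : E} (hx : x ∈ R.Φ) (hy : y ∈ R.Φ) (h1 : x ≠ y) (h2 : x ≠ -y) :
    pr x y * pr y x < 4 := by
  have hcs := strict_cs (R.ne_zero hy) (R.indep hx hy h1 h2)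
  have hqx := R.norm2_pos hx
  have hqy := R.norm2_pos hy
  have : pr x y * pr y x
      = 4 * ((inner ℝ x y : ℝ) * (inner ℝ x y : ℝ)) / ((inner ℝ x x : ℝ) * (inner ℝ y y : ℝ)) := by
    rw [pr, pr, real_inner_comm y x]
    field_simp
    ring
  rw [this]
  rw [div_lt_iff₀ (by positivity)]
  nlinarith

/-- Root-string lemma: positive inner ℝ product forces the difference to be a root. -/
lemma string {x y : E} (hx : x ∈ R.Φ) (hy : y ∈ R.Φ) (hin : 0 < (inner ℝ x y : ℝ))
    (h1 : x ≠ y) (h2 : x ≠ -y) : x - y ∈ R.Φ := by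
  obtain ⟨m, hm⟩ := R.pr_int hx hy
  obtain ⟨n, hn⟩ := R.pr_int hy hx
  have hqx := R.norm2_pos hx
  have hqy := R.norm2_pos hy
  have hmpos : (0:ℝ) < m := by
    rw [← hm]; unfold pr; positivity
  have hnpos : (0:ℝ) < n := by
    rw [← hn]; unfold pr; rw [real_inner_comm]; positivity
  have hm1 : 1 ≤ m := by exact_mod_cast hmpos
  have hn1 : 1 ≤ n := by exact_mod_cast hnpos
  have hprod : (m:ℝ) * n < 4 := by rw [← hm, ← hn]; exact R.prod_lt_four hx hy h1 h2
  have hprod' : m * n < 4 := by exact_mod_cast hprod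
  have : m = 1 ∨ n = 1 := by
    by_contra hcon
    push_neg at hcon
    obtain ⟨hm2, hn2⟩ := hcon
    have : 2 ≤ m := by omega
    have : 2 ≤ n := by omega
    nlinarith
  rcases this with h | h
  · have := R.refl_mem hx hy
    rw [hm, h] at this
    simpa using this
  · have := R.refl_mem hy hx
    rw [hn, h] at this
    simp only [Int.cast_one, one_smul] at this
    have := R.neg_memΦ this
    simpa using this

end RSys

/-- Reflection in `y` as a linear map. -/
noncomputable def rmap {E : Type*} [NormedAddCommGroup E] [InnerProductSpace ℝ E] (y : E) :
    E →ₗ[ℝ] E where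
  toFun x := x - pr x y • y
  map_add' a b := by
    show (a + b) - pr (a + b) y • y = (a - pr a y • y) + (b - pr b y • y)
    rw [pr_add_left]; module
  map_smul' c a := by
    show (c • a) - pr (c • a) y • y = c • (a - pr a y • y)
    rw [pr_smul_left]; module

lemma rmap_apply {E : Type*} [NormedAddCommGroup E] [InnerProductSpace ℝ E] (y x : E) :
    rmap y x = x - pr x y • y := rfl

lemma rmap_invol {E : Type*} [NormedAddCommGroup E] [InnerProductSpace ℝ E] {y : E}
    (hy : y ≠ 0) (x : E) : rmap y (rmap y x) = x := by
  rw [rmap_apply, rmap_apply, pr_sub_left, pr_smul_left, pr_self hy]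
  module

namespace RSys

variable {E : Type*} [NormedAddCommGroup E] [InnerProductSpace ℝ E] (R : RSys E)

/-- The set of positive roots sent to negative ones by the reflection in `y`. -/
noncomputable def Sset (y : E) : Finset E := R.P.filter (fun α => rmap y α ∉ R.P)

lemma Sset_subset (y : E) : R.Sset y ⊆ R.P := Finset.filter_subset _ _

lemma sum_S {y : E} (hy : y ∈ R.Φ) :
    pr (∑ α ∈ R.P, α) y = ∑ α ∈ R.Sset y, pr α y := by
  classical
  have hy0 := R.ne_zero hy
  have h1 : ∑ α ∈ R.P.filter (fun α => ¬ (rmap y α ∉ R.P)), rmap y α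
      = ∑ α ∈ R.P.filter (fun α => ¬ (rmap y α ∉ R.P)), α := by
    refine Finset.sum_nbij' (fun a => rmap y a) (fun a => rmap y a) ?_ ?_ ?_ ?_ ?_
    · intro a ha
      simp only [Finset.mem_filter, not_not] at ha ⊢
      exact ⟨ha.2, by rw [rmap_invol hy0]; exact ha.1⟩
    · intro a ha
      simp only [Finset.mem_filter, not_not] at ha ⊢
      exact ⟨ha.2, by rw [rmap_invol hy0]; exact ha.1⟩
    · intro a _; exact rmap_invol hy0 a
    · intro a _; exact rmap_invol hy0 a
    · intro a _; rfl
  have hcompl : ∑ α ∈ R.P.filter (fun α => ¬ (rmap y α ∉ R.P)), α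
      = (∑ α ∈ R.P, α) - ∑ α ∈ R.Sset y, α := by
    rw [eq_sub_iff_add_eq, add_comm]
    exact Finset.sum_filter_add_sum_filter_not R.P (fun α => rmap y α ∉ R.P) _
  have hchain : (∑ α ∈ R.P, α) - pr (∑ α ∈ R.P, α) y • y
      = ((∑ α ∈ R.Sset y, α) - (∑ α ∈ R.Sset y, pr α y) • y)
        + ((∑ α ∈ R.P, α) - ∑ α ∈ R.Sset y, α) := by
    calc (∑ α ∈ R.P, α) - pr (∑ α ∈ R.P, α) y • y
        = (rmap y) (∑ α ∈ R.P, α) := (rmap_apply _ _).symm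
      _ = ∑ α ∈ R.P, rmap y α := map_sum _ _ _
      _ = ∑ α ∈ R.Sset y, rmap y α
            + ∑ α ∈ R.P.filter (fun α => ¬ (rmap y α ∉ R.P)), rmap y α :=
          (Finset.sum_filter_add_sum_filter_not R.P (fun α => rmap y α ∉ R.P) _).symm
      _ = ((∑ α ∈ R.Sset y, α) - (∑ α ∈ R.Sset y, pr α y) • y)
            + ((∑ α ∈ R.P, α) - ∑ α ∈ R.Sset y, α) := by
          rw [h1, hcompl]
          congr 1
          simp only [rmap_apply]
          rw [Finset.sum_sub_distrib, Finset.sum_smul]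
  have heq : pr (∑ α ∈ R.P, α) y • y = (∑ α ∈ R.Sset y, pr α y) • y := by
    have h2 : (∑ α ∈ R.P, α) - pr (∑ α ∈ R.P, α) y • y
        = (∑ α ∈ R.P, α) - (∑ α ∈ R.Sset y, pr α y) • y := by
      rw [hchain]; abel
    have := sub_right_injective h2
    simpa using this
  exact smul_left_injective ℝ hy0 heq

end RSys

namespace RSys

variable {E : Type*} [NormedAddCommGroup E] [InnerProductSpace ℝ E] (R : RSys E)

lemma mem_Sset {y α : E} (h : α ∈ R.Sset y) : α ∈ R.P ∧ α - pr α y • y ∉ R.P := by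
  have := Finset.mem_filter.1 h
  exact ⟨this.1, this.2⟩

lemma mem_Sset_iff {y α : E} : α ∈ R.Sset y ↔ α ∈ R.P ∧ α - pr α y • y ∉ R.P := by
  rw [Sset, Finset.mem_filter]; rfl

lemma S_coeff_pos {y α : E} (hy : y ∈ R.P) (h : α ∈ R.Sset y) : 0 < pr α y := by
  obtain ⟨hαP, hnot⟩ := R.mem_Sset h
  have hαΦ := R.memΦ hαP
  have hyΦ := R.memΦ hy
  have hrefl : α - pr α y • y ∈ R.Φ := R.refl_mem hαΦ hyΦ
  have hneg : -(α - pr α y • y) ∈ R.P := R.trichot hrefl hnot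
  have hfneg : 0 < (inner ℝ (-(α - pr α y • y)) R.f : ℝ) := R.fpos hneg
  have hfα : 0 < (inner ℝ α R.f : ℝ) := R.fpos hαP
  have hfy : 0 < (inner ℝ y R.f : ℝ) := R.fpos hy
  have hexp : (inner ℝ (-(α - pr α y • y)) R.f : ℝ)
      = pr α y * (inner ℝ y R.f : ℝ) - (inner ℝ α R.f : ℝ) := by
    simp [inner_sub_left, real_inner_smul_left]
  rw [hexp] at hfneg
  nlinarith

lemma y_mem_Sset {y : E} (hy : y ∈ R.P) : y ∈ R.Sset y := by
  rw [mem_Sset_iff]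
  refine ⟨hy, ?_⟩
  rw [pr_self (R.ne_zero (R.memΦ hy))]
  have : y - (2:ℝ) • y = -y := by module
  rw [this]
  exact R.hposneg y hy

/-- Pairing of `ρ`-type sums with a coroot is a positive (even, here halved) integer. -/
lemma rho_int {y : E} (hy : y ∈ R.P) :
    ∃ k : ℤ, 1 ≤ k ∧ pr (∑ α ∈ R.P, α) y = 2 * (k : ℝ) := by
  classical
  have hyΦ := R.memΦ hy
  have hy0 := R.ne_zero hyΦ
  -- integer-valued coefficient function
  set mfun : E → ℤ := fun α => if h : ∃ n : ℤ, pr α y = (n : ℝ) then h.choose else 0 with hmfun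
  have hm : ∀ α ∈ R.Φ, (mfun α : ℝ) = pr α y := by
    intro α hα
    have h := R.pr_int hα hyΦ
    rw [hmfun]
    simp only [dif_pos h]
    exact h.choose_spec.symm
  set S' : Finset E := (R.Sset y).erase y with hS'
  have hsplit : ∑ α ∈ R.Sset y, pr α y = pr y y + ∑ α ∈ S', pr α y :=
    (Finset.add_sum_erase _ _ (R.y_mem_Sset hy)).symm
  -- properties of the involution ι α = pr α y • y - α on S'
  have hiota : ∀ α ∈ S', (pr α y • y - α ∈ S' ∧ pr (pr α y • y - α) y = pr α y
      ∧ pr (pr α y • y - α) y • y - (pr α y • y - α) = α) := by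
    intro α hα
    have hαS := Finset.mem_of_mem_erase hα
    have hαne : α ≠ y := Finset.ne_of_mem_erase hα
    obtain ⟨hαP, hnot⟩ := R.mem_Sset hαS
    have hαΦ := R.memΦ hαP
    have hreflΦ : α - pr α y • y ∈ R.Φ := R.refl_mem hαΦ hyΦ
    have hι : pr α y • y - α = -(α - pr α y • y) := by abel
    have hιP : pr α y • y - α ∈ R.P := by rw [hι]; exact R.trichot hreflΦ hnot
    have hpr2 : pr (pr α y • y - α) y = pr α y := by
      rw [pr_sub_left, pr_smul_left, pr_self hy0]; ring
    have hback : pr (pr α y • y - α) y • y - (pr α y • y - α) = α := by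
      rw [hpr2]; abel
    have hιnotP : (pr α y • y - α) - pr (pr α y • y - α) y • y ∉ R.P := by
      rw [hpr2]
      have : pr α y • y - α - pr α y • y = -α := by abel
      rw [this]
      exact R.hposneg α hαP
    have hιS : pr α y • y - α ∈ R.Sset y := R.mem_Sset_iff.2 ⟨hιP, hιnotP⟩
    have hιney : pr α y • y - α ≠ y := by
      intro hcontra
      have hc2 : pr α y • y = y + α := sub_eq_iff_eq_add.1 hcontra
      have : α = (pr α y - 1) • y := by
        rw [sub_smul, one_smul, hc2]; abel
      rcases R.hred y hyΦ (pr α y - 1) (this ▸ hαΦ) with h | h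
      · apply hαne; rw [this, h, one_smul]
      · have : α = -y := by rw [this, h, neg_one_smul]
        exact R.hposneg y hy (this ▸ hαP)
    exact ⟨Finset.mem_erase.2 ⟨hιney, hιS⟩, hpr2, hback⟩
  -- the sum over S' is even
  have heven : ∃ j : ℤ, 0 ≤ j ∧ ∑ α ∈ S', pr α y = 2 * (j : ℝ) := by
    have hsumint : ∑ α ∈ S', pr α y = ((∑ α ∈ S', mfun α : ℤ) : ℝ) := by
      rw [Int.cast_sum]
      exact Finset.sum_congr rfl fun α hα =>
        (hm α (R.memΦ (R.Sset_subset y (Finset.mem_of_mem_erase hα)))).symm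
    have hz : ((∑ α ∈ S', mfun α : ℤ) : ZMod 2) = 0 := by
      push_cast
      refine Finset.sum_involution (fun α _ => pr α y • y - α) ?_ ?_ ?_ ?_
      · intro α hα
        have h := hiota α hα
        have hmem := Finset.mem_of_mem_erase (h.1 |> Finset.mem_of_mem_erase |> fun _ => h.1)
        have hι := h.1
        have : mfun (pr α y • y - α) = mfun α := by
          have e1 := hm _ (R.memΦ (R.Sset_subset y (Finset.mem_of_mem_erase hι)))
          have e2 := hm α (R.memΦ (R.Sset_subset y (Finset.mem_of_mem_erase hα)))
          have : (mfun (pr α y • y - α) : ℝ) = (mfun α : ℝ) := by rw [e1, e2, h.2.1]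
          exact_mod_cast this
        rw [this]
        ring_nf
        rw [show (2 : ZMod 2) = 0 by decide]
        ring
      · intro α hα _
        intro hcontra
        have hc : pr α y • y - α = α := hcontra
        have hαS := Finset.mem_of_mem_erase hα
        obtain ⟨hαP, _⟩ := R.mem_Sset hαS
        have hαΦ := R.memΦ hαP
        have h2 : pr α y • y = α + α := sub_eq_iff_eq_add.1 hc
        have h3 : (2:ℝ) • ((pr α y / 2) • y) = (2:ℝ) • α := by
          rw [smul_smul, show (2:ℝ) * (pr α y / 2) = pr α y by ring, h2, two_smul]
        have hαy : α = (pr α y / 2) • y :=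
          ((smul_right_injective E (two_ne_zero : (2:ℝ) ≠ 0)) h3).symm
        rcases R.hred y hyΦ (pr α y / 2) (hαy ▸ hαΦ) with h | h
        · exact (Finset.ne_of_mem_erase hα) (by rw [hαy, h, one_smul])
        · have : α = -y := by rw [hαy, h, neg_one_smul]
          exact R.hposneg y hy (this ▸ hαP)
      · intro α hα; exact (hiota α hα).1
      · intro α hα; exact (hiota α hα).2.2
    have hdvd : (2:ℤ) ∣ ∑ α ∈ S', mfun α := by
      have := (ZMod.intCast_zmod_eq_zero_iff_dvd _ 2).1 hz
      exact_mod_cast this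
    obtain ⟨j, hj⟩ := hdvd
    refine ⟨j, ?_, by rw [hsumint, hj]; push_cast; ring⟩
    by_contra hneg
    push_neg at hneg
    have hsumpos : (0:ℝ) ≤ ∑ α ∈ S', pr α y :=
      Finset.sum_nonneg fun α hα =>
        le_of_lt (R.S_coeff_pos hy (Finset.mem_of_mem_erase hα))
    rw [hsumint, hj] at hsumpos
    push_cast at hsumpos
    nlinarith [hsumpos, (show (j:ℝ) < 0 by exact_mod_cast hneg)]
  obtain ⟨j, hj0, hjsum⟩ := heven
  refine ⟨1 + j, by omega, ?_⟩
  rw [R.sum_S hyΦ, hsplit, pr_self hy0, hjsum]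
  push_cast; ring


/-- For an indecomposable positive root `y`, the reflection `s_y` permutes the other
positive roots, i.e. `Sset y = {y}`. -/
lemma Sset_simple {y : E} (hy : y ∈ R.P)
    (hsimp : ¬ ∃ u ∈ R.P, ∃ v ∈ R.P, y = u + v) : R.Sset y = {y} := by
  classical
  have hyΦ := R.memΦ hy
  have hy0 := R.ne_zero hyΦ
  have hq := R.norm2_pos hyΦ
  apply Finset.eq_singleton_iff_unique_mem.2
  refine ⟨R.y_mem_Sset hy, ?_⟩
  intro α hαS
  by_contra hne
  obtain ⟨hαP, hnot⟩ := R.mem_Sset hαS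
  have hαΦ := R.memΦ hαP
  have hα0 := R.ne_zero hαΦ
  have hαny : α ≠ -y := fun h => R.hposneg y hy (h ▸ hαP)
  obtain ⟨m, hm⟩ := R.pr_int hαΦ hyΦ
  have hmpos : (0:ℝ) < m := by rw [← hm]; exact R.S_coeff_pos hy hαS
  have hm1 : 1 ≤ m := by exact_mod_cast hmpos
  have hδΦ : α - pr α y • y ∈ R.Φ := R.refl_mem hαΦ hyΦ
  have hδP : pr α y • y - α ∈ R.P := by
    have := R.trichot hδΦ hnot
    simpa [neg_sub] using this
  have hinnerαy : (inner ℝ α y : ℝ) = (m : ℝ) * (inner ℝ y y : ℝ) / 2 := by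
    have := inner_eq_pr_mul (x := α) hy0
    rw [hm] at this; linarith [this]
  -- case m = 1
  rcases eq_or_lt_of_le hm1 with h1 | h2
  · apply hsimp
    refine ⟨α, hαP, pr α y • y - α, hδP, ?_⟩
    rw [hm, ← h1]
    push_cast
    rw [one_smul]; abel
  · -- m ≥ 2
    obtain ⟨n, hn⟩ := R.pr_int hyΦ hαΦ
    have hm1' : (1:ℝ) ≤ m := by exact_mod_cast hm1
    have hnpos : (0:ℝ) < n := by
      rw [← hn]
      unfold pr
      apply div_pos
      · rw [real_inner_comm]; nlinarith
      · exact R.norm2_pos hαΦ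
    have hn1 : 1 ≤ n := by exact_mod_cast hnpos
    have hprod : (m:ℝ) * n < 4 := by
      rw [← hm, ← hn]; exact R.prod_lt_four hαΦ hyΦ hne hαny
    have hprodZ : m * n < 4 := by exact_mod_cast hprod
    have hm2 : 2 ≤ m := by exact_mod_cast h2
    have hneq1 : n = 1 := by nlinarith
    have hyαΦ : y - α ∈ R.Φ := by
      have := R.refl_mem hyΦ hαΦ
      rw [hn, hneq1] at this
      simpa using this
    rcases (R.hdecomp (y - α)).1 hyαΦ with hyαP | hαyP
    · exact hsimp ⟨α, hαP, y - α, hyαP, by abel⟩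
    · rw [neg_sub] at hαyP
      -- α - y ∈ R.P
      rw [hneq1, mul_one] at hprodZ
      have hm3 : m = 2 ∨ m = 3 := by omega
      rcases hm3 with hm2' | hm3'
      · apply hsimp
        refine ⟨α - y, hαyP, pr α y • y - α, hδP, ?_⟩
        rw [hm, hm2']
        push_cast
        rw [two_smul]; abel
      · -- m = 3 : need α - 2y ∈ Φ
        have hαyΦ : α - y ∈ R.Φ := R.memΦ hαyP
        have hinner2 : 0 < (inner ℝ (α - y) y : ℝ) := by
          rw [inner_sub_left, hinnerαy, hm3']
          push_cast
          nlinarith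
        have hne2 : α - y ≠ y := by
          intro h
          have : α = (2:ℝ) • y := by
            rw [two_smul, ← sub_eq_iff_eq_add.1 h]
          have hcon := R.hred y hyΦ 2 (this ▸ hαΦ)
          norm_num at hcon
        have hne2' : α - y ≠ -y := by
          intro h
          have : α = 0 := by
            have := sub_eq_iff_eq_add.1 h
            rw [this]; abel
          exact hα0 this
        have hα2yΦ : α - y - y ∈ R.Φ := R.string hαyΦ hyΦ hinner2 hne2 hne2'
        rcases (R.hdecomp (α - y - y)).1 hα2yΦ with hP | hP
        · apply hsimp
          refine ⟨α - y - y, hP, pr α y • y - α, hδP, ?_⟩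
          rw [hm, hm3']
          push_cast
          rw [show (3:ℝ) • y = y + y + y by module]
          abel
        · apply hsimp
          refine ⟨-(α - y - y), hP, α - y, hαyP, ?_⟩
          abel
  
lemma simple_rho {y : E} (hy : y ∈ R.P)
    (hsimp : ¬ ∃ u ∈ R.P, ∃ v ∈ R.P, y = u + v) :
    pr (∑ α ∈ R.P, α) y = 2 := by
  rw [R.sum_S (R.memΦ hy), R.Sset_simple hy hsimp, Finset.sum_singleton,
    pr_self (R.ne_zero (R.memΦ hy))]

end RSys

section Refl

variable {E : Type*} [NormedAddCommGroup E] [InnerProductSpace ℝ E]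

lemma refl_inner (α : E) (hα : (inner ℝ α α : ℝ) ≠ 0) (x y : E) :
    (inner ℝ (x - (2 * (inner ℝ x α : ℝ) / (inner ℝ α α : ℝ)) • α)
      (y - (2 * (inner ℝ y α : ℝ) / (inner ℝ α α : ℝ)) • α) : ℝ) = inner ℝ x y := by
  simp only [inner_sub_left, inner_sub_right, real_inner_smul_left, real_inner_smul_right]
  rw [real_inner_comm α y, real_inner_comm α x]
  field_simp
  ring

end Refl

set_option maxHeartbeats 3200000 in
open scoped Classical in
/-- Let `lam` be a dominant weight lying in the open wall `σ` of the positive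
Weyl chamber, and suppose `lam − ρ` is regular.  Then
`wσ (lam − ρ) = lam + 2 ρσ − ρ` is dominant regular, where `wσ` is the longest element of the
Weyl group of the centralizer `G_σ` and `ρσ` is half the sum of the positive roots vanishing
on `σ`. -/
theorem regular_shift_dominant_regular
    {E : Type*} [NormedAddCommGroup E] [InnerProductSpace ℝ E] [FiniteDimensional ℝ E]
    (Φ Φpos : Finset E)
    (h0 : (0 : E) ∉ Φ)
    (hdecomp : ∀ α : E, α ∈ Φ ↔ (α ∈ Φpos ∨ -α ∈ Φpos))
    (hposneg : ∀ α ∈ Φpos, -α ∉ Φpos)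
    (hfun : ∃ f : E, ∀ α ∈ Φ, (α ∈ Φpos ↔ 0 < (inner ℝ α f : ℝ)))
    (hrefl : ∀ α ∈ Φ, ∀ β ∈ Φ, β - (2 * (inner ℝ β α : ℝ) / (inner ℝ α α : ℝ)) • α ∈ Φ)
    (hcrys : ∀ α ∈ Φ, ∀ β ∈ Φ, ∃ m : ℤ, 2 * (inner ℝ β α : ℝ) / (inner ℝ α α : ℝ) = (m : ℝ))
    (hred : ∀ α ∈ Φ, ∀ c : ℝ, c • α ∈ Φ → c = 1 ∨ c = -1)
    (lam ρ ρσ : E)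
    (hρ : ρ = (2 : ℝ)⁻¹ • ∑ α ∈ Φpos, α)
    (hρσ : ρσ = (2 : ℝ)⁻¹ • ∑ α ∈ Φpos.filter (fun α => (inner ℝ lam α : ℝ) = 0), α)
    (hdom : ∀ α ∈ Φpos, 0 ≤ (inner ℝ lam α : ℝ))
    (hlamint : ∀ α ∈ Φ, ∃ m : ℤ, 2 * (inner ℝ lam α : ℝ) / (inner ℝ α α : ℝ) = (m : ℝ))
    (hreg : ∀ α ∈ Φpos, (inner ℝ (lam - ρ) α : ℝ) ≠ 0)
    (wσ : E ≃ₗ[ℝ] E)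
    (hwσWσ : wσ ∈ Subgroup.closure
      {w : E ≃ₗ[ℝ] E | ∃ α ∈ Φ, (inner ℝ lam α : ℝ) = 0 ∧ ∀ μ : E,
        w μ = μ - (2 * (inner ℝ μ α : ℝ) / (inner ℝ α α : ℝ)) • α})
    (hwσlong : ∀ α ∈ Φpos, (inner ℝ lam α : ℝ) = 0 → -(wσ α) ∈ Φpos) :
    wσ (lam - ρ) = lam + (2 : ℝ) • ρσ - ρ
    ∧ ∀ α ∈ Φpos, 0 < (inner ℝ (wσ (lam - ρ)) α : ℝ) := by
  classical
  obtain ⟨f, hfP⟩ := hfun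
  -- the two bundled root systems
  set R : RSys E := ⟨Φ, Φpos, f, h0, hdecomp, hposneg, hfP, hrefl, hcrys, hred⟩ with hRdef
  set Pσ : Finset E := Φpos.filter (fun α => (inner ℝ lam α : ℝ) = 0) with hPσdef
  set Φσ : Finset E := Φ.filter (fun α => (inner ℝ lam α : ℝ) = 0) with hΦσdef
  have hPσsub : Pσ ⊆ Φpos := Finset.filter_subset _ _
  have hΦσsub : Φσ ⊆ Φ := Finset.filter_subset _ _
  have hstrict : ∀ β ∈ Φpos, (inner ℝ lam β : ℝ) ≠ 0 → 0 < (inner ℝ lam β : ℝ) :=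
    fun β hβ hne => lt_of_le_of_ne (hdom β hβ) (Ne.symm hne)
  have htrich' : ∀ v ∈ Φ, 0 < (inner ℝ lam v : ℝ) → v ∈ Φpos := by
    intro v hv hpos
    rcases (hdecomp v).1 hv with h | h
    · exact h
    · exact absurd (hdom _ h) (by rw [inner_neg_right]; linarith)
  have h0σ : (0:E) ∉ Φσ := fun h => h0 (hΦσsub h)
  have hdecompσ : ∀ α : E, α ∈ Φσ ↔ (α ∈ Pσ ∨ -α ∈ Pσ) := by
    intro α
    constructor
    · intro h
      obtain ⟨hΦ, hz⟩ := Finset.mem_filter.1 h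
      rcases (hdecomp α).1 hΦ with h' | h'
      · exact Or.inl (Finset.mem_filter.2 ⟨h', hz⟩)
      · exact Or.inr (Finset.mem_filter.2 ⟨h', by rw [inner_neg_right, hz, neg_zero]⟩)
    · intro h
      rcases h with h' | h'
      · obtain ⟨hP, hz⟩ := Finset.mem_filter.1 h'
        exact Finset.mem_filter.2 ⟨(hdecomp α).2 (Or.inl hP), hz⟩
      · obtain ⟨hP, hz⟩ := Finset.mem_filter.1 h'
        refine Finset.mem_filter.2 ⟨(hdecomp α).2 (Or.inr hP), ?_⟩
        rw [inner_neg_right, neg_eq_zero] at hz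
        exact hz
  have hposnegσ : ∀ α ∈ Pσ, -α ∉ Pσ :=
    fun α h h' => hposneg α (hPσsub h) (hPσsub h')
  have hfσ : ∀ α ∈ Φσ, (α ∈ Pσ ↔ 0 < (inner ℝ α f : ℝ)) := by
    intro α hα
    obtain ⟨hΦ, hz⟩ := Finset.mem_filter.1 hα
    constructor
    · intro h; exact (hfP α hΦ).1 (hPσsub h)
    · intro h; exact Finset.mem_filter.2 ⟨(hfP α hΦ).2 h, hz⟩
  have hreflσ : ∀ α ∈ Φσ, ∀ β ∈ Φσ,
      β - (2 * (inner ℝ β α : ℝ) / (inner ℝ α α : ℝ)) • α ∈ Φσ := by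
    intro α hα β hβ
    obtain ⟨hαΦ, hαz⟩ := Finset.mem_filter.1 hα
    obtain ⟨hβΦ, hβz⟩ := Finset.mem_filter.1 hβ
    refine Finset.mem_filter.2 ⟨hrefl α hαΦ β hβΦ, ?_⟩
    rw [inner_sub_right, inner_smul_right, hαz, hβz]
    simp
  have hcrysσ : ∀ α ∈ Φσ, ∀ β ∈ Φσ, ∃ m : ℤ,
      2 * (inner ℝ β α : ℝ) / (inner ℝ α α : ℝ) = (m : ℝ) :=
    fun α hα β hβ => hcrys α (hΦσsub hα) β (hΦσsub hβ)
  have hredσ : ∀ α ∈ Φσ, ∀ c : ℝ, c • α ∈ Φσ → c = 1 ∨ c = -1 :=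
    fun α hα c hc => hred α (hΦσsub hα) c (hΦσsub hc)
  set Rσ : RSys E := ⟨Φσ, Pσ, f, h0σ, hdecompσ, hposnegσ, hfσ, hreflσ, hcrysσ, hredσ⟩ with hRσdef
  -- properties of elements of the Weyl group of the wall
  have keyW : ∀ w ∈ Subgroup.closure
      {w : E ≃ₗ[ℝ] E | ∃ α ∈ Φ, (inner ℝ lam α : ℝ) = 0 ∧ ∀ μ : E,
        w μ = μ - (2 * (inner ℝ μ α : ℝ) / (inner ℝ α α : ℝ)) • α},
      (w lam = lam ∧ (∀ x y : E, (inner ℝ (w x) (w y) : ℝ) = inner ℝ x y) ∧ ∀ γ ∈ Φ, w γ ∈ Φ) := by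
    intro w hw
    refine Subgroup.closure_induction ?_ ?_ ?_ ?_ hw
    · rintro x ⟨α, hαΦ, hlam0, hform⟩
      have hq : (inner ℝ α α : ℝ) ≠ 0 := ne_of_gt (R.norm2_pos hαΦ)
      refine ⟨?_, ?_, ?_⟩
      · rw [hform lam, hlam0]
        simp
      · intro u v
        rw [hform u, hform v]
        exact refl_inner α hq u v
      · intro γ hγ
        rw [hform γ]
        exact hrefl α hαΦ γ hγ
    · exact ⟨rfl, fun _ _ => rfl, fun γ hγ => hγ⟩
    · rintro x y _ _ ⟨hx1, hx2, hx3⟩ ⟨hy1, hy2, hy3⟩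
      refine ⟨?_, ?_, ?_⟩
      · show x (y lam) = lam
        rw [hy1, hx1]
      · intro u v
        show (inner ℝ (x (y u)) (x (y v)) : ℝ) = inner ℝ u v
        rw [hx2, hy2]
      · intro γ hγ
        show x (y γ) ∈ Φ
        exact hx3 _ (hy3 γ hγ)
    · rintro x _ ⟨hx1, hx2, hx3⟩
      have hinvapp : ∀ v : E, x ((x⁻¹ : E ≃ₗ[ℝ] E) v) = v := fun v => x.apply_symm_apply v
      have hinvapp' : ∀ v : E, (x⁻¹ : E ≃ₗ[ℝ] E) (x v) = v := fun v => x.symm_apply_apply v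
      refine ⟨?_, ?_, ?_⟩
      · conv_lhs => rw [← hx1]
        exact hinvapp' lam
      · intro u v
        conv_rhs => rw [← hinvapp u, ← hinvapp v, hx2]
      · have himg : Finset.image (fun a => x a) Φ = Φ := by
          apply Finset.eq_of_subset_of_card_le
          · intro b hb
            obtain ⟨a, ha, rfl⟩ := Finset.mem_image.1 hb
            exact hx3 a ha
          · rw [Finset.card_image_of_injective _ x.injective]
        intro γ hγ
        have : γ ∈ Finset.image (fun a => x a) Φ := himg.symm ▸ hγ
        obtain ⟨a, ha, hxa⟩ := Finset.mem_image.1 this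
        have : (x⁻¹ : E ≃ₗ[ℝ] E) γ = a := by rw [← hxa]; exact hinvapp' a
        rw [this]
        exact ha
  obtain ⟨hwlam, hwinner, hwroots⟩ := keyW wσ hwσWσ
  obtain ⟨hvlam, hvinner, hvroots⟩ := keyW wσ⁻¹ (inv_mem hwσWσ)
  have hwlaminner : ∀ μ : E, (inner ℝ lam (wσ μ) : ℝ) = inner ℝ lam μ := by
    intro μ
    conv_lhs => rw [← hwlam]
    exact hwinner lam μ
  have hvlaminner : ∀ μ : E, (inner ℝ lam ((wσ⁻¹ : E ≃ₗ[ℝ] E) μ) : ℝ) = inner ℝ lam μ := by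
    intro μ
    conv_lhs => rw [← hvlam]
    exact hvinner lam μ
  -- Part 1
  set Pc : Finset E := Φpos.filter (fun α => ¬ (inner ℝ lam α : ℝ) = 0) with hPcdef
  have himg1 : ∑ α ∈ Pσ, wσ α = -∑ α ∈ Pσ, α := by
    have hgmem : ∀ α ∈ Pσ, -(wσ α) ∈ Pσ := by
      intro α hα
      obtain ⟨hP, hz⟩ := Finset.mem_filter.1 hα
      refine Finset.mem_filter.2 ⟨hwσlong α hP hz, ?_⟩
      rw [inner_neg_right, hwlaminner, hz, neg_zero]
    have hginj : Set.InjOn (fun α => -(wσ α)) Pσ := fun a _ b _ h =>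
      wσ.injective (neg_injective h)
    have himg : Pσ.image (fun α => -(wσ α)) = Pσ := by
      apply Finset.eq_of_subset_of_card_le
      · intro b hb
        obtain ⟨a, ha, rfl⟩ := Finset.mem_image.1 hb
        exact hgmem a ha
      · rw [Finset.card_image_of_injOn hginj]
    have : ∑ α ∈ Pσ, α = ∑ α ∈ Pσ, -(wσ α) := by
      conv_lhs => rw [← himg]
      exact Finset.sum_image (f := fun v : E => v) (g := fun α => -(wσ α))
        (fun a ha b hb h => hginj ha hb h)
    rw [Finset.sum_neg_distrib] at this
    exact (neg_eq_iff_eq_neg.2 this).symm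
  have himg2 : ∑ α ∈ Pc, wσ α = ∑ α ∈ Pc, α := by
    have hgmem : ∀ α ∈ Pc, wσ α ∈ Pc := by
      intro α hα
      obtain ⟨hP, hz⟩ := Finset.mem_filter.1 hα
      have hpos : 0 < (inner ℝ lam (wσ α) : ℝ) := by
        rw [hwlaminner]
        exact hstrict α hP hz
      refine Finset.mem_filter.2 ⟨htrich' _ (hwroots α (R.memΦ hP)) hpos, ?_⟩
      rw [hwlaminner]
      exact hz
    have hginj : Set.InjOn (fun α => wσ α) Pc := fun a _ b _ h => wσ.injective h
    have himg : Pc.image (fun α => wσ α) = Pc := by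
      apply Finset.eq_of_subset_of_card_le
      · intro b hb
        obtain ⟨a, ha, rfl⟩ := Finset.mem_image.1 hb
        exact hgmem a ha
      · rw [Finset.card_image_of_injOn hginj]
    conv_rhs => rw [← himg]
    exact (Finset.sum_image (f := fun v : E => v) (g := fun α => wσ α)
      (fun a ha b hb h => hginj ha hb h)).symm
  have hsplitP : (∑ α ∈ Φpos, α) = (∑ α ∈ Pσ, α) + ∑ α ∈ Pc, α :=
    (Finset.sum_filter_add_sum_filter_not Φpos _ _).symm
  have hpart1 : wσ (lam - ρ) = lam + (2 : ℝ) • ρσ - ρ := by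
    have hwρ : wσ ρ = ρ - (2:ℝ) • ρσ := by
      have hsum : ∑ α ∈ Φpos, (wσ α) = -(∑ α ∈ Pσ, α) + ∑ α ∈ Pc, α := by
        rw [← Finset.sum_filter_add_sum_filter_not Φpos
          (fun α => (inner ℝ lam α : ℝ) = 0) (fun α => wσ α), himg1, himg2]
      rw [hρ, map_smul, map_sum, hsum, hρσ, hsplitP]
      module
    rw [map_sub, hwlam, hwρ]
    abel

  -- helpers for the crux argument
  have hnozero : ∀ v ∈ Φ, (inner ℝ (lam - ρ) v : ℝ) ≠ 0 := by
    intro v hv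
    rcases (hdecomp v).1 hv with hP | hP
    · exact hreg v hP
    · intro hz
      exact hreg _ hP (by rw [inner_neg_right, hz, neg_zero])
  have hprρ : ∀ β ∈ Φpos, ∃ k : ℤ, 1 ≤ k ∧ pr ρ β = (k:ℝ) := by
    intro β hβ
    obtain ⟨k, hk1, hk2⟩ := R.rho_int hβ
    have hk2' : pr (∑ α ∈ Φpos, α) β = 2 * (k:ℝ) := hk2
    refine ⟨k, hk1, ?_⟩
    rw [hρ, pr_smul_left, hk2']
    ring
  have hprlam : ∀ β ∈ Φ, ∃ m : ℤ, pr lam β = (m:ℝ) := fun β hβ => hlamint β hβ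
  have hprlamρ : ∀ β ∈ Φpos, ∃ k : ℤ, pr (lam - ρ) β = (k:ℝ)
      ∧ (inner ℝ (lam - ρ) β : ℝ) = (k:ℝ) * (inner ℝ β β : ℝ) / 2 := by
    intro β hβ
    have hβΦ : β ∈ Φ := R.memΦ hβ
    obtain ⟨m, hm⟩ := hprlam β hβΦ
    obtain ⟨k, _, hk⟩ := hprρ β hβ
    have he : pr (lam - ρ) β = ((m - k : ℤ):ℝ) := by
      rw [pr_sub_left, hm, hk]; push_cast; ring
    refine ⟨m - k, he, ?_⟩
    rw [inner_eq_pr_mul (R.ne_zero hβΦ), he]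
  -- pairing a `σ`-root against `ρ` or `ρσ` gives the same answer
  have hSeq : ∀ y ∈ Pσ, pr (∑ α ∈ Φpos, α) y = pr (∑ α ∈ Pσ, α) y := by
    intro y hy
    have hyP : y ∈ Φpos := hPσsub hy
    have hyΦ : y ∈ Φ := R.memΦ hyP
    have hyz : (inner ℝ lam y : ℝ) = 0 := (Finset.mem_filter.1 hy).2
    have hyΦσ : y ∈ Φσ := Finset.mem_filter.2 ⟨hyΦ, hyz⟩
    have e1 : pr (∑ α ∈ Φpos, α) y = ∑ α ∈ R.Sset y, pr α y := R.sum_S hyΦ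
    have e2 : pr (∑ α ∈ Pσ, α) y = ∑ α ∈ Rσ.Sset y, pr α y := Rσ.sum_S hyΦσ
    have hset : R.Sset y = Rσ.Sset y := by
      ext α
      rw [R.mem_Sset_iff, Rσ.mem_Sset_iff]
      constructor
      · rintro ⟨hαP, hnot⟩
        have hαP' : α ∈ Φpos := hαP
        have hαΦ : α ∈ Φ := R.memΦ hαP'
        have hreflΦ : α - pr α y • y ∈ Φ := R.refl_mem hαΦ hyΦ
        have hδP : pr α y • y - α ∈ Φpos := by
          have := R.trichot hreflΦ hnot
          simpa [neg_sub] using this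
        have hδlam : (inner ℝ lam (pr α y • y - α) : ℝ) = -(inner ℝ lam α : ℝ) := by
          rw [inner_sub_right, real_inner_smul_right, hyz]; ring
        have hz : (inner ℝ lam α : ℝ) = 0 := by
          have h1 := hdom α hαP'
          have h2 := hdom _ hδP
          rw [hδlam] at h2
          linarith
        exact ⟨Finset.mem_filter.2 ⟨hαP', hz⟩, fun hcon => hnot (hPσsub hcon)⟩
      · rintro ⟨hαPσ, hnot⟩
        have hαPσ' : α ∈ Pσ := hαPσ
        have hαP := hPσsub hαPσ'
        refine ⟨hαP, fun hcon => hnot ?_⟩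
        show α - pr α y • y ∈ Pσ
        refine Finset.mem_filter.2 ⟨hcon, ?_⟩
        rw [inner_sub_right, real_inner_smul_right, hyz, (Finset.mem_filter.1 hαPσ').2]
        ring
    rw [e1, e2, hset]
  -- THE CRUX: positivity of `⟨λ-ρ, β⟩` for positive roots not orthogonal to `λ`
  have crux : ∀ β ∈ Φpos, (inner ℝ lam β : ℝ) ≠ 0 → 0 < (inner ℝ (lam - ρ) β : ℝ) := by
    have main : ∀ N : ℕ, ∀ β ∈ Φpos,
        (Φpos.filter (fun z => (inner ℝ z f : ℝ) < (inner ℝ β f : ℝ))).card = N →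
        (inner ℝ lam β : ℝ) ≠ 0 → 0 < (inner ℝ (lam - ρ) β : ℝ) := by
      intro N
      induction N using Nat.strong_induction_on with
      | _ N IH =>
      intro β hβ hcard hlamβ
      have IH' : ∀ x ∈ Φpos, (inner ℝ x f : ℝ) < (inner ℝ β f : ℝ) → (inner ℝ lam x : ℝ) ≠ 0 →
          0 < (inner ℝ (lam - ρ) x : ℝ) := by
        intro x hx hlt hlamx
        have hsub : Φpos.filter (fun z => (inner ℝ z f:ℝ) < (inner ℝ x f:ℝ))
            ⊆ Φpos.filter (fun z => (inner ℝ z f:ℝ) < (inner ℝ β f:ℝ)) := by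
          intro z hz
          obtain ⟨hz1, hz2⟩ := Finset.mem_filter.1 hz
          exact Finset.mem_filter.2 ⟨hz1, lt_trans hz2 hlt⟩
        have hlt2 : (Φpos.filter (fun z => (inner ℝ z f:ℝ) < (inner ℝ x f:ℝ))).card < N := by
          rw [← hcard]
          apply Finset.card_lt_card
          rw [Finset.ssubset_iff_of_subset hsub]
          exact ⟨x, Finset.mem_filter.2 ⟨hx, hlt⟩,
            fun hmem => lt_irrefl _ (Finset.mem_filter.1 hmem).2⟩
        exact IH _ hlt2 x hx rfl hlamx
      by_contra hng
      have hlt0 : (inner ℝ (lam - ρ) β : ℝ) < 0 :=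
        lt_of_le_of_ne (not_lt.1 hng) (hreg β hβ)
      have hβΦ : β ∈ Φ := R.memΦ hβ
      have hqβ : 0 < (inner ℝ β β : ℝ) := R.norm2_pos hβΦ
      have hβpos : 0 < (inner ℝ lam β:ℝ) := hstrict β hβ hlamβ
      obtain ⟨k, hk1, hk2⟩ := hprlamρ β hβ
      have hkneg : k ≤ -1 := by
        have hkR : (k:ℝ) < 0 := by
          by_contra hcon
          push_neg at hcon
          have h1 : 0 ≤ (k:ℝ) * ((inner ℝ β β : ℝ) / 2) :=
            mul_nonneg hcon (by linarith only [hqβ])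
          rw [hk2] at hlt0
          linarith only [h1, hlt0]
        have : k < 0 := by exact_mod_cast hkR
        omega
      have hble : (inner ℝ (lam - ρ) β : ℝ) ≤ -((inner ℝ β β : ℝ)/2) := by
        have hkc : (k:ℝ) ≤ -1 := by exact_mod_cast hkneg
        have h1 : 0 ≤ (-((k:ℝ)+1)) * (inner ℝ β β : ℝ) :=
          mul_nonneg (by linarith only [hkc]) (le_of_lt hqβ)
        rw [hk2]
        linarith only [h1, hqβ]
      by_cases hdec : ∃ u ∈ Φpos, ∃ v ∈ Φpos, β = u + v
      · obtain ⟨u, hu, v, hv, huv⟩ := hdec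
        have hlamuv : (inner ℝ lam u : ℝ) + inner ℝ lam v = inner ℝ lam β := by
          rw [huv, inner_add_right]
        have hfu : 0 < (inner ℝ u f : ℝ) := R.fpos hu
        have hfv : 0 < (inner ℝ v f : ℝ) := R.fpos hv
        have hfuv : (inner ℝ u f:ℝ) + inner ℝ v f = inner ℝ β f := by rw [huv, inner_add_left]
        by_cases hzero : (inner ℝ lam u : ℝ) = 0 ∨ (inner ℝ lam v : ℝ) = 0
        · -- Sub-case B : one part lies in the wall
          set D : Finset E := Pσ.filter (fun z => β - z ∈ Φ) with hDdef
          have hDne : D.Nonempty := by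
            rcases hzero with h | h
            · refine ⟨u, Finset.mem_filter.2 ⟨Finset.mem_filter.2 ⟨hu, h⟩, ?_⟩⟩
              rw [huv, add_sub_cancel_left]
              exact R.memΦ hv
            · refine ⟨v, Finset.mem_filter.2 ⟨Finset.mem_filter.2 ⟨hv, h⟩, ?_⟩⟩
              rw [huv, add_sub_cancel_right]
              exact R.memΦ hu
          obtain ⟨y, hyD, hymin⟩ := Finset.exists_min_image D (fun z => (inner ℝ z f : ℝ)) hDne
          obtain ⟨hyPσ, hmxΦ⟩ := Finset.mem_filter.1 hyD
          obtain ⟨hyP, hylam⟩ := Finset.mem_filter.1 hyPσ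
          have hyΦ : y ∈ Φ := R.memΦ hyP
          have hxlam : (inner ℝ lam (β - y) : ℝ) = inner ℝ lam β := by
            rw [inner_sub_right, hylam]; ring
          have hxP : β - y ∈ Φpos := htrich' _ hmxΦ (by rw [hxlam]; exact hβpos)
          have hfy : 0 < (inner ℝ y f:ℝ) := R.fpos hyP
          have hfx : (inner ℝ (β - y) f : ℝ) < inner ℝ β f := by
            rw [inner_sub_left]; linarith
          have ht : 0 < (inner ℝ (lam - ρ) (β - y) : ℝ) :=
            IH' _ hxP hfx (by rw [hxlam]; exact ne_of_gt hβpos)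
          obtain ⟨kx, hkx1, hkx2⟩ := hprlamρ _ hxP
          have hqx : 0 < (inner ℝ (β - y) (β - y) : ℝ) := R.norm2_pos hmxΦ
          have hkx0 : 1 ≤ kx := by
            have hkxR : 0 < (kx:ℝ) := by
              by_contra hcon
              push_neg at hcon
              have h1 : 0 ≤ (-(kx:ℝ)) * (inner ℝ (β - y) (β - y) : ℝ) :=
                mul_nonneg (by linarith only [hcon]) (le_of_lt hqx)
              rw [hkx2] at ht
              linarith only [h1, ht]
            have : 0 < kx := by exact_mod_cast hkxR
            omega
          have hkx0R : (1:ℝ) ≤ (kx:ℝ) := by exact_mod_cast hkx0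
          have hta : (inner ℝ (β - y) (β - y) : ℝ)/2 ≤ inner ℝ (lam - ρ) (β - y) := by
            have h1 : 0 ≤ ((kx:ℝ) - 1) * (inner ℝ (β - y) (β - y) : ℝ) :=
              mul_nonneg (by linarith only [hkx0R]) (le_of_lt hqx)
            rw [hkx2]
            linarith only [h1]
          -- minimality of `y` forces it to be indecomposable inside the wall
          have hindec : ¬ ∃ u' ∈ Pσ, ∃ v' ∈ Pσ, y = u' + v' := by
            rintro ⟨y₁, hy₁, y₂, hy₂, hy12⟩
            obtain ⟨hy₁P, hy₁lam⟩ := Finset.mem_filter.1 hy₁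
            obtain ⟨hy₂P, hy₂lam⟩ := Finset.mem_filter.1 hy₂
            have hy₁Φ := R.memΦ hy₁P
            have hy₂Φ := R.memΦ hy₂P
            have hf1 : 0 < (inner ℝ y₁ f:ℝ) := R.fpos hy₁P
            have hf2 : 0 < (inner ℝ y₂ f:ℝ) := R.fpos hy₂P
            have hyf12 : (inner ℝ y f:ℝ) = inner ℝ y₁ f + inner ℝ y₂ f := by
              rw [hy12, inner_add_left]
            have hsmaller : ∀ z ∈ D, ¬ ((inner ℝ z f:ℝ) < inner ℝ y f) :=
              fun z hz hlt => absurd (hymin z hz) (not_le.2 hlt)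
            have hxne : ∀ w : E, (inner ℝ lam w : ℝ) = 0 → β - y ≠ w ∧ β - y ≠ -w := by
              intro w hw
              constructor
              · intro h
                rw [h, hw] at hxlam
                exact (ne_of_gt hβpos) hxlam.symm
              · intro h
                rw [h, inner_neg_right, hw, neg_zero] at hxlam
                exact (ne_of_gt hβpos) hxlam.symm
            by_cases hc1 : (inner ℝ (β - y) y₁ : ℝ) < 0
            · have hne := hxne (-y₁) (by rw [inner_neg_right, hy₁lam, neg_zero])
              have hstr : (β - y) - -y₁ ∈ Φ := by
                refine R.string hmxΦ (R.neg_memΦ hy₁Φ) ?_ hne.1 (by simpa using hne.2)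
                rw [inner_neg_right]; linarith
              have hy₂D : y₂ ∈ D := by
                refine Finset.mem_filter.2 ⟨hy₂, ?_⟩
                have hEQv : β - y₂ = (β - y) - -y₁ := by rw [hy12]; abel
                rw [hEQv]; exact hstr
              exact hsmaller y₂ hy₂D (by rw [hyf12]; linarith)
            · by_cases hc2 : (inner ℝ (β - y) y₂ : ℝ) < 0
              · have hne := hxne (-y₂) (by rw [inner_neg_right, hy₂lam, neg_zero])
                have hstr : (β - y) - -y₂ ∈ Φ := by
                  refine R.string hmxΦ (R.neg_memΦ hy₂Φ) ?_ hne.1 (by simpa using hne.2)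
                  rw [inner_neg_right]; linarith
                have hy₁D : y₁ ∈ D := by
                  refine Finset.mem_filter.2 ⟨hy₁, ?_⟩
                  have hEQv : β - y₁ = (β - y) - -y₂ := by rw [hy12]; abel
                  rw [hEQv]; exact hstr
                exact hsmaller y₁ hy₁D (by rw [hyf12]; linarith)
              · push_neg at hc1 hc2
                have hqy : 0 < (inner ℝ y y : ℝ) := R.norm2_pos hyΦ
                have hyy : (inner ℝ y y₁:ℝ) + inner ℝ y y₂ = inner ℝ y y := by
                  rw [hy12, inner_add_right]
                have hpick : 0 < (inner ℝ y y₁:ℝ) ∨ 0 < (inner ℝ y y₂:ℝ) := by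
                  by_contra hcon
                  push_neg at hcon
                  obtain ⟨ha1, ha2⟩ := hcon
                  linarith
                have hβeq : β = (β - y) + y := by abel
                have hβne : ∀ w : E, (inner ℝ lam w : ℝ) = 0 → β ≠ w ∧ β ≠ -w := by
                  intro w hw
                  constructor
                  · intro h; rw [h, hw] at hβpos; exact lt_irrefl _ hβpos
                  · intro h
                    rw [h, inner_neg_right, hw, neg_zero] at hβpos
                    exact lt_irrefl _ hβpos
                rcases hpick with h | h
                · have hβy : 0 < (inner ℝ β y₁ : ℝ) := by
                    have hcalc : (inner ℝ β y₁ : ℝ) = inner ℝ (β - y) y₁ + inner ℝ y y₁ := by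
                      conv_lhs => rw [hβeq, inner_add_left]
                    rw [hcalc]; linarith
                  have hne := hβne y₁ hy₁lam
                  have hstr : β - y₁ ∈ Φ := R.string hβΦ hy₁Φ hβy hne.1 hne.2
                  exact hsmaller y₁ (Finset.mem_filter.2 ⟨hy₁, hstr⟩)
                    (by rw [hyf12]; linarith)
                · have hβy : 0 < (inner ℝ β y₂ : ℝ) := by
                    have hcalc : (inner ℝ β y₂ : ℝ) = inner ℝ (β - y) y₂ + inner ℝ y y₂ := by
                      conv_lhs => rw [hβeq, inner_add_left]
                    rw [hcalc]; linarith
                  have hne := hβne y₂ hy₂lam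
                  have hstr : β - y₂ ∈ Φ := R.string hβΦ hy₂Φ hβy hne.1 hne.2
                  exact hsmaller y₂ (Finset.mem_filter.2 ⟨hy₂, hstr⟩)
                    (by rw [hyf12]; linarith)
          -- `y` is simple inside the wall, hence `⟨ρ, y⟩ = |y|²/2`
          have h2σ : pr (∑ α ∈ Pσ, α) y = 2 := Rσ.simple_rho hyPσ hindec
          have hEQy : pr (∑ α ∈ Φpos, α) y = 2 := by rw [hSeq y hyPσ, h2σ]
          have hsρ : (inner ℝ ρ y : ℝ) = (inner ℝ y y : ℝ)/2 := by
            rw [hρ, real_inner_smul_left, inner_eq_pr_mul (R.ne_zero hyΦ), hEQy]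
            ring
          -- numeric tight-case analysis
          have hqy : 0 < (inner ℝ y y:ℝ) := R.norm2_pos hyΦ
          have hβxy : β = (β - y) + y := by abel
          have hcc : (inner ℝ β β : ℝ)
              = inner ℝ (β-y) (β-y) + 2*(inner ℝ (β-y) y : ℝ) + inner ℝ y y := by
            conv_lhs => rw [hβxy]
            exact real_inner_add_add_self _ _
          have hvy : (inner ℝ (lam - ρ) y : ℝ) = -((inner ℝ y y : ℝ)/2) := by
            rw [inner_sub_left, hylam, hsρ]; ring
          have hvβ : (inner ℝ (lam-ρ) β : ℝ)
              = inner ℝ (lam-ρ) (β-y) + inner ℝ (lam-ρ) y := by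
            conv_lhs => rw [hβxy, inner_add_right]
          have hmain1 : (inner ℝ (lam-ρ) (β-y) : ℝ) - inner ℝ y y/2 ≤ -((inner ℝ β β:ℝ)/2) := by
            rw [hvβ, hvy] at hble
            linarith
          have hpa : (inner ℝ (β-y) y : ℝ) ≤ -(inner ℝ (β-y) (β-y) : ℝ) := by
            linarith [hta, hcc, hmain1]
          have hba : (inner ℝ (β-y) (β-y) : ℝ) < inner ℝ y y := by
            linarith [hta, hmain1, hqβ]
          obtain ⟨n1, hn1⟩ := R.pr_int hmxΦ hyΦ
          obtain ⟨n2, hn2⟩ := R.pr_int hyΦ hmxΦ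
          have hn1R : (n1:ℝ) = 2*(inner ℝ (β-y) y : ℝ)/(inner ℝ y y : ℝ) := by
            rw [← hn1]; rfl
          have hn2R : (n2:ℝ) = 2*(inner ℝ y (β-y) : ℝ)/(inner ℝ (β-y) (β-y) : ℝ) := by
            rw [← hn2]; rfl
          have hpcomm : (inner ℝ y (β-y):ℝ) = inner ℝ (β-y) y := real_inner_comm _ _
          have hxney : β - y ≠ y ∧ β - y ≠ -y := by
            constructor
            · intro h
              rw [h, hylam] at hxlam
              exact (ne_of_gt hβpos) hxlam.symm
            · intro h
              rw [h, inner_neg_right, hylam, neg_zero] at hxlam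
              exact (ne_of_gt hβpos) hxlam.symm
          have hprod : (n1:ℝ)*(n2:ℝ) < 4 := by
            rw [← hn1, ← hn2]
            exact R.prod_lt_four hmxΦ hyΦ hxney.1 hxney.2
          have hn1neg : (n1:ℝ) < 0 := by
            rw [hn1R]
            apply div_neg_of_neg_of_pos _ hqy
            linarith [hpa, hqx]
          have he1 : (n1:ℝ) * (inner ℝ y y : ℝ) = 2 * (inner ℝ (β-y) y : ℝ) := by
            rw [hn1R]
            field_simp
          have he2 : (n2:ℝ) * (inner ℝ (β-y) (β-y) : ℝ) = 2 * (inner ℝ (β-y) y : ℝ) := by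
            rw [hn2R, hpcomm]
            field_simp
          have hn2len1 : (n2:ℝ) ≤ (n1:ℝ) := by
            have hstep : 0 ≤ (-(2*(inner ℝ (β-y) y : ℝ)))
                * ((inner ℝ y y : ℝ) - inner ℝ (β-y) (β-y)) :=
              mul_nonneg (by linarith only [hpa, hqx]) (by linarith only [hba])
            have hmul : ((n1:ℝ) - n2) * ((inner ℝ (β-y) (β-y) : ℝ) * (inner ℝ y y : ℝ))
                = (-(2*(inner ℝ (β-y) y : ℝ))) * ((inner ℝ y y : ℝ) - inner ℝ (β-y) (β-y)) := by
              linear_combination (inner ℝ (β-y) (β-y) : ℝ) * he1 - (inner ℝ y y : ℝ) * he2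
            by_contra hcon
            push_neg at hcon
            have hneg : ((n1:ℝ) - n2) * ((inner ℝ (β-y) (β-y) : ℝ) * (inner ℝ y y : ℝ)) < 0 :=
              mul_neg_of_neg_of_pos (by linarith only [hcon]) (mul_pos hqx hqy)
            rw [hmul] at hneg
            linarith only [hneg, hstep]
          have hn1Z : n1 ≤ -1 := by
            have : n1 < 0 := by exact_mod_cast hn1neg
            omega
          have hn1eq : n1 = -1 := by
            by_contra hcon
            have h2 : n1 ≤ -2 := by omega
            have h2R : (n1:ℝ) ≤ -2 := by exact_mod_cast h2
            have hkey : 0 ≤ (-(n1:ℝ)-2) * (-(n2:ℝ)-2) :=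
              mul_nonneg (by linarith only [h2R]) (by linarith only [h2R, hn2len1])
            have hkey' : 0 ≤ (n1:ℝ)*(n2:ℝ) + 2*(n1:ℝ) + 2*(n2:ℝ) + 4 := by
              calc (0:ℝ) ≤ (-(n1:ℝ)-2) * (-(n2:ℝ)-2) := hkey
                _ = (n1:ℝ)*(n2:ℝ) + 2*(n1:ℝ) + 2*(n2:ℝ) + 4 := by ring
            linarith only [hkey', hprod, h2R, hn2len1]
          have hn1m : (n1:ℝ) = -1 := by exact_mod_cast hn1eq
          have hpb : 2*(inner ℝ (β-y) y:ℝ) = -(inner ℝ y y : ℝ) := by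
            rw [hn1m] at hn1R
            field_simp at hn1R
            linarith
          have hca : (inner ℝ β β:ℝ) = inner ℝ (β-y) (β-y) := by rw [hcc]; linarith
          have hn2a : (n2:ℝ) * (inner ℝ (β-y) (β-y) : ℝ) = -(inner ℝ y y : ℝ) := by
            rw [hn2R, hpcomm]
            field_simp
            linarith
          have hbge : (inner ℝ y y : ℝ) ≥ 2*(inner ℝ (β-y) (β-y) : ℝ) := by
            linarith [hta, hmain1, hca]
          have hn2le : (n2:ℝ) ≤ -2 := by
            have h1 : (n2:ℝ) * inner ℝ (β-y) (β-y) ≤ -2 * inner ℝ (β-y) (β-y) := by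
              linarith [hn2a, hbge]
            exact (mul_le_mul_iff_of_pos_right hqx).1 h1
          have hn2leZ : n2 ≤ -2 := by exact_mod_cast hn2le
          have hprodZ : n1 * n2 < 4 := by exact_mod_cast hprod
          have hn2geZ : -3 ≤ n2 := by rw [hn1eq] at hprodZ; omega
          have htup : (inner ℝ (lam-ρ) (β-y) : ℝ)
              ≤ ((inner ℝ y y : ℝ) - inner ℝ (β-y) (β-y))/2 := by
            linarith [hmain1, hca]
          have hkxle : (kx:ℝ) ≤ -(n2:ℝ) - 1 := by
            have h1 : (kx:ℝ) * inner ℝ (β-y) (β-y) ≤ (-(n2:ℝ) - 1) * inner ℝ (β-y) (β-y) := by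
              have h2 : (kx:ℝ) * inner ℝ (β-y) (β-y) / 2
                  ≤ ((inner ℝ y y : ℝ) - inner ℝ (β-y) (β-y))/2 := by
                rw [← hkx2]; exact htup
              linarith only [hn2a, h2]
            exact (mul_le_mul_iff_of_pos_right hqx).1 h1
          have hkxleZ : kx ≤ -n2 - 1 := by exact_mod_cast hkxle
          have hzΦ : y - pr y (β-y) • (β-y) ∈ Φ := R.refl_mem hyΦ hmxΦ
          have hn2cases : n2 = -2 ∨ n2 = -3 := by omega
          rcases hn2cases with hv2 | hv3
          · -- n2 = -2
            have hkx1' : kx = 1 := by omega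
            have htval : (inner ℝ (lam-ρ) (β-y) : ℝ) = inner ℝ (β-y) (β-y)/2 := by
              rw [hkx2, hkx1']; push_cast; ring
            have hauxform : y - pr y (β-y) • (β-y) = y + (2:ℝ) • (β-y) := by
              rw [hn2, hv2]; push_cast; module
            have hb2a : (inner ℝ y y : ℝ) = 2 * inner ℝ (β-y) (β-y) := by
              rw [hv2] at hn2a; push_cast at hn2a; linarith
            have hauxval : (inner ℝ (lam-ρ) (y + (2:ℝ) • (β-y)) : ℝ) = 0 := by
              rw [inner_add_right, real_inner_smul_right, hvy, htval]
              linarith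
            exact hnozero _ (hauxform ▸ hzΦ) hauxval
          · -- n2 = -3
            have hb3a : (inner ℝ y y:ℝ) = 3*(inner ℝ (β-y) (β-y) : ℝ) := by
              rw [hv3] at hn2a; push_cast at hn2a; linarith
            have hauxform : y - pr y (β-y) • (β-y) = y + (3:ℝ) • (β-y) := by
              rw [hn2, hv3]; push_cast; module
            have hzΦ' : y + (3:ℝ) • (β-y) ∈ Φ := hauxform ▸ hzΦ
            have hkxcases : kx = 1 ∨ kx = 2 := by omega
            rcases hkxcases with hkc | hkc
            · have htval : (inner ℝ (lam-ρ) (β-y) : ℝ) = inner ℝ (β-y) (β-y)/2 := by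
                rw [hkx2, hkc]; push_cast; ring
              have hauxval : (inner ℝ (lam-ρ) (y + (3:ℝ) • (β-y)) :ℝ) = 0 := by
                rw [inner_add_right, real_inner_smul_right, hvy, htval]
                linarith
              exact hnozero _ hzΦ' hauxval
            · have htval : (inner ℝ (lam-ρ) (β-y) : ℝ) = inner ℝ (β-y) (β-y) := by
                rw [hkx2, hkc]; push_cast; ring
              have hinz : (inner ℝ (y + (3:ℝ) • (β-y)) y : ℝ)
                  = inner ℝ y y + 3*(inner ℝ (β-y) y : ℝ) := by
                rw [inner_add_left, real_inner_smul_left]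
              have hprz : pr (y + (3:ℝ) • (β-y)) y = -1 := by
                rw [pr, hinz, div_eq_iff (ne_of_gt hqy)]
                linarith [hpb]
              have haux2 : (y + (3:ℝ) • (β-y)) - pr (y + (3:ℝ) • (β-y)) y • y ∈ Φ :=
                R.refl_mem hzΦ' hyΦ
              have hauxform2 : (y + (3:ℝ) • (β-y)) - pr (y + (3:ℝ) • (β-y)) y • y
                  = (2:ℝ) • y + (3:ℝ) • (β-y) := by rw [hprz]; module
              have hauxval : (inner ℝ (lam-ρ) ((2:ℝ) • y + (3:ℝ) • (β-y)) : ℝ) = 0 := by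
                rw [inner_add_right, real_inner_smul_right, real_inner_smul_right, hvy, htval]
                linarith
              exact hnozero _ (hauxform2 ▸ haux2) hauxval
        · push_neg at hzero
          have h1 := IH' u hu (by rw [← hfuv]; linarith) hzero.1
          have h2 := IH' v hv (by rw [← hfuv]; linarith) hzero.2
          have : (inner ℝ (lam - ρ) β : ℝ) = inner ℝ (lam - ρ) u + inner ℝ (lam - ρ) v := by
            rw [huv, inner_add_right]
          linarith
      · -- β indecomposable in Φpos
        have hsr : pr (∑ α ∈ Φpos, α) β = 2 := R.simple_rho hβ hdec
        obtain ⟨m, hm⟩ := hprlam β hβΦ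
        have hm1 : (1:ℝ) ≤ (m:ℝ) := by
          have hmpos : 0 < (m:ℝ) := by
            rw [← hm]
            unfold pr
            exact div_pos (by linarith) hqβ
          have : 0 < m := by exact_mod_cast hmpos
          exact_mod_cast this
        have hρ1 : pr ρ β = 1 := by
          rw [hρ, pr_smul_left, hsr]; norm_num
        have hkval : (k:ℝ) = (m:ℝ) - 1 := by
          rw [← hk1, pr_sub_left, hm, hρ1]
        have : (k:ℝ) ≤ -1 := by exact_mod_cast hkneg
        linarith
    intro β hβ h
    exact main _ β hβ rfl h
  -- final assembly
  refine ⟨hpart1, ?_⟩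
  intro α hα
  have hαΦ : α ∈ Φ := R.memΦ hα
  by_cases hz : (inner ℝ lam α : ℝ) = 0
  · rw [hpart1]
    have hαPσ : α ∈ Pσ := Finset.mem_filter.2 ⟨hα, hz⟩
    have hqα : 0 < (inner ℝ α α : ℝ) := R.norm2_pos hαΦ
    obtain ⟨k, hk1, hk2⟩ := Rσ.rho_int hαPσ
    have hk2' : pr (∑ z ∈ Pσ, z) α = 2 * (k:ℝ) := hk2
    have hk1R : (1:ℝ) ≤ (k:ℝ) := by exact_mod_cast hk1
    have hinnσ : (inner ℝ (∑ z ∈ Pσ, z) α : ℝ) = (k:ℝ) * (inner ℝ α α : ℝ) := by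
      rw [inner_eq_pr_mul (R.ne_zero hαΦ), hk2']
      ring
    have hEQα : (inner ℝ (∑ z ∈ Φpos, z) α : ℝ) = (inner ℝ (∑ z ∈ Pσ, z) α : ℝ) := by
      rw [inner_eq_pr_mul (R.ne_zero hαΦ), hSeq α hαPσ, ← inner_eq_pr_mul (R.ne_zero hαΦ)]
    have hval : (inner ℝ (lam + (2:ℝ) • ρσ - ρ) α : ℝ)
        = 2 * (inner ℝ ρσ α : ℝ) - (inner ℝ ρ α : ℝ) := by
      rw [inner_sub_left, inner_add_left, real_inner_smul_left, hz]
      ring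
    rw [hval, hρ, hρσ, real_inner_smul_left, real_inner_smul_left, hEQα, hinnσ]
    have hkq : 0 < (k:ℝ) * (inner ℝ α α : ℝ) :=
      mul_pos (by linarith only [hk1R]) hqα
    linarith only [hkq]
  · have hwinvα : wσ ((wσ⁻¹ : E ≃ₗ[ℝ] E) α) = α := wσ.apply_symm_apply α
    have hβΦ : (wσ⁻¹ : E ≃ₗ[ℝ] E) α ∈ Φ := hvroots α hαΦ
    have hβlam : (inner ℝ lam ((wσ⁻¹ : E ≃ₗ[ℝ] E) α) : ℝ) = inner ℝ lam α := hvlaminner α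
    have hβP : (wσ⁻¹ : E ≃ₗ[ℝ] E) α ∈ Φpos :=
      htrich' _ hβΦ (by rw [hβlam]; exact hstrict α hα hz)
    have hswap : (inner ℝ (wσ (lam - ρ)) α : ℝ)
        = inner ℝ (lam - ρ) ((wσ⁻¹ : E ≃ₗ[ℝ] E) α) := by
      conv_lhs => rw [← hwinvα]
      exact hwinner (lam - ρ) _
    rw [hswap]
    exact crux _ hβP (by rw [hβlam]; exact hz)
end

section
/- Let T = ℝ^k/ℤ^k act on ℂ^n through a homomorphism given by an integer matrix, producing a Delzant space with labelled polyhedron (S, P). For open faces F₁ ⪯ F₂ of P, the excess functions satisfy e_{S|_{F₁}}(F₂) = e_S(F₂) + l, where l is the number of labels in S_{F₁}. Consequently, if the excess function e_S is constant on P, then e_{S|_F} is constant on the closure of F for every open face F. -/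
/-!
A label `i` that is tight on a nonempty open face `F₁ = Face I₁` must lie in `I₁`, since
every other label is strict on `F₁`. Hence it is tight on every face `Face I₂` with
`I₁ ⊆ I₂`, so all the reversed labels of `S|_{F₁}` are tight there and the excess grows by
exactly `#S_{F₁}`.
-/

open scoped Classical

section OpenFace

variable {ι α : Type*} (f : ι → α → ℝ) (r : ι → ℝ)

def openFace (I : Finset ι) : Set α :=
  {μ | (∀ i ∈ I, f i μ = r i) ∧ ∀ i ∉ I, r i < f i μ}

variable {f r}

theorem mem_of_forall_eq_on_openFace {I : Finset ι} (hne : (openFace f r I).Nonempty)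
    {i : ι} (hi : ∀ μ ∈ openFace f r I, f i μ = r i) : i ∈ I := by
  obtain ⟨μ, hμ⟩ := hne
  by_contra hiI
  exact (hμ.2 i hiI).ne' (hi μ hμ)

theorem eq_on_openFace_of_subset {I J : Finset ι} (hIJ : I ⊆ J) {i : ι} (hi : i ∈ I) :
    ∀ μ ∈ openFace f r J, f i μ = r i :=
  fun _ hμ => hμ.1 i (hIJ hi)

end OpenFace

theorem excess_of_restricted_labels_general
    (k n : ℕ) (v : Fin n → Fin k → ℤ) (r : Fin n → ℝ)
    (Face : Finset (Fin n) → Set (Fin k → ℝ))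
    (hFace : ∀ I, Face I = {μ : Fin k → ℝ |
        (∀ i ∈ I, ∑ j, μ j * (v i j : ℝ) = r i) ∧
        (∀ i ∉ I, r i < ∑ j, μ j * (v i j : ℝ))})
    (tight : Set (Fin k → ℝ) → Finset (Fin n))
    (htight : ∀ F, tight F =
        Finset.univ.filter (fun i => ∀ μ ∈ F, ∑ j, μ j * (v i j : ℝ) = r i))
    (dimF : Set (Fin k → ℝ) → ℕ)
    (eS : Set (Fin k → ℝ) → ℤ)
    (heS : ∀ F, eS F = ((tight F).card : ℤ) - ((k : ℤ) - (dimF F : ℤ)))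
    (I₁ : Finset (Fin n)) (h₁ : (Face I₁).Nonempty)
    (eS' : Set (Fin k → ℝ) → ℤ)
    -- excess with respect to the label set S|_{F₁}: the labels of S together with the
    -- reversed labels (−v i, −r i) for i ∈ S_{F₁} = tight (Face I₁)
    (heS' : ∀ F, eS' F =
        (((tight F).card : ℤ) +
          (((tight (Face I₁)).filter
              (fun i => ∀ μ ∈ F, ∑ j, μ j * (v i j : ℝ) = r i)).card : ℤ))
          - ((k : ℤ) - (dimF F : ℤ))) :
    (∀ I₂ : Finset (Fin n), I₁ ⊆ I₂ → (Face I₂).Nonempty →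
        eS' (Face I₂) = eS (Face I₂) + ((tight (Face I₁)).card : ℤ))
    ∧ ((∀ I I' : Finset (Fin n), (Face I).Nonempty → (Face I').Nonempty →
          eS (Face I) = eS (Face I')) →
        ∀ I I' : Finset (Fin n), I₁ ⊆ I → I₁ ⊆ I' →
          (Face I).Nonempty → (Face I').Nonempty →
          eS' (Face I) = eS' (Face I')) := by
  have hFace' : ∀ I, Face I = openFace (fun i μ => ∑ j, μ j * (v i j : ℝ)) r I := hFace
  have tight_on_smaller_face : ∀ I₂, I₁ ⊆ I₂ →
      (tight (Face I₁)).filter (fun i => ∀ μ ∈ Face I₂, ∑ j, μ j * (v i j : ℝ) = r i) =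
        tight (Face I₁) := by
    intro I₂ hsub
    refine Finset.filter_true_of_mem fun i hi => hFace' I₂ ▸ eq_on_openFace_of_subset hsub ?_
    rw [htight, Finset.mem_filter, hFace'] at hi
    exact mem_of_forall_eq_on_openFace (hFace' I₁ ▸ h₁) hi.2
  have restricted_excess : ∀ I₂, I₁ ⊆ I₂ → (Face I₂).Nonempty →
      eS' (Face I₂) = eS (Face I₂) + ((tight (Face I₁)).card : ℤ) := by
    intro I₂ hsub _
    rw [heS', heS, tight_on_smaller_face I₂ hsub]
    ring
  refine ⟨restricted_excess, fun hconst I I' hI hI' hne hne' => ?_⟩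
  rw [restricted_excess I hI hne, restricted_excess I' hI' hne', hconst I I' hne hne']

/-- Let `(S, P)` be a labelled polyhedron for a `k`-torus, with labels
`(v i, r i)` and polyhedron `P = {μ | ⟨μ, v i⟩ ≥ r i ∀ i}`; parametrize the open faces of
`P` by the sets of tight labels: `Face I` is the set of `μ` with `⟨μ, v i⟩ = r i` for
`i ∈ I` and `⟨μ, v i⟩ > r i` for `i ∉ I`.  Let `tight F` be the set of labels whose
hyperplane contains `F`, `e_S(F) = #(tight F) − codim F` the excess, and `e_{S|F₁}` the
excess function for the label set `S|_{F₁} = S ∪ {(−v i, −r i) : i ∈ S_{F₁}}`.  Then for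
open faces `F₂ ⪯ F₁` (i.e. `I₁ ⊆ I₂`), one has `e_{S|F₁}(F₂) = e_S(F₂) + #S_{F₁}`.
Consequently, if `e_S` is constant on `P`, then `e_{S|F₁}` is constant on the closure of
`F₁`. -/
theorem excess_of_restricted_labels
    (k n : ℕ) (v : Fin n → Fin k → ℤ) (hv : ∀ i, v i ≠ 0) (r : Fin n → ℝ)
    (Face : Finset (Fin n) → Set (Fin k → ℝ))
    (hFace : ∀ I, Face I = {μ : Fin k → ℝ |
        (∀ i ∈ I, ∑ j, μ j * (v i j : ℝ) = r i) ∧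
        (∀ i ∉ I, r i < ∑ j, μ j * (v i j : ℝ))})
    (tight : Set (Fin k → ℝ) → Finset (Fin n))
    (htight : ∀ F, tight F =
        Finset.univ.filter (fun i => ∀ μ ∈ F, ∑ j, μ j * (v i j : ℝ) = r i))
    (dimF : Set (Fin k → ℝ) → ℕ)
    (hdimF : ∀ F, dimF F = Module.finrank ℝ ↥((affineSpan ℝ F).direction))
    (eS : Set (Fin k → ℝ) → ℤ)
    (heS : ∀ F, eS F = ((tight F).card : ℤ) - ((k : ℤ) - (dimF F : ℤ)))
    (I₁ : Finset (Fin n)) (h₁ : (Face I₁).Nonempty)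
    (eS' : Set (Fin k → ℝ) → ℤ)
    -- excess with respect to the label set S|_{F₁}: the labels of S together with the
    -- reversed labels (−v i, −r i) for i ∈ S_{F₁} = tight (Face I₁)
    (heS' : ∀ F, eS' F =
        (((tight F).card : ℤ) +
          (((tight (Face I₁)).filter
              (fun i => ∀ μ ∈ F, ∑ j, μ j * (v i j : ℝ) = r i)).card : ℤ))
          - ((k : ℤ) - (dimF F : ℤ))) :
    (∀ I₂ : Finset (Fin n), I₁ ⊆ I₂ → (Face I₂).Nonempty →
        eS' (Face I₂) = eS (Face I₂) + ((tight (Face I₁)).card : ℤ))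
    ∧ ((∀ I I' : Finset (Fin n), (Face I).Nonempty → (Face I').Nonempty →
          eS (Face I) = eS (Face I')) →
        ∀ I I' : Finset (Fin n), I₁ ⊆ I → I₁ ⊆ I' →
          (Face I).Nonempty → (Face I').Nonempty →
          eS' (Face I) = eS' (Face I')) :=
  excess_of_restricted_labels_general k n v r Face hFace tight htight dimF eS heS I₁ h₁ eS' heS'
end

section
/- Let T = ℝ^n/ℤ^n act on ℂ^n in the standard way with moment map φ(z) = −(1/2)(|z₁|²,...,|z_n|²), and let A : ℝ^n → 𝔥 be the linear map sending eᵢ to vᵢ for labels vᵢ in the lattice of a torus H. Given an open face F of the polyhedron P associated to the labels, a point z ∈ ℂⁿ appearing in the zero level set over F has T^n-stabilizer exactly the subtorus T^n_F generated by the span of {eᵢ : (vᵢ,rᵢ) ∈ S_F}; hence the stabilizer of the corresponding point of the Delzant space quotient is K_F = ker(Ā_F : T^n_F → H_F), which has dimension equal to the excess e_S(F) = #S_F − codim F. -/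
/-!
On the level set `|zᵢ|² = 2 (⟨η, vᵢ⟩ - rᵢ)`, so `zᵢ = 0` exactly for the labels `i ∈ I` tight at
`η`; the circle factor `exp (2πi tᵢ)` fixes `zᵢ` iff `zᵢ = 0` or `tᵢ ∈ ℤ`, which gives the
stabilizer. The Lie algebra of `K_F` is the kernel of `A` restricted to `ℝ^I`, whose image is
the span of `{vᵢ : i ∈ I}`; rank–nullity gives the excess.
-/

open Module LinearMap Submodule

theorem Submodule.finrank_map_add_finrank_inf_ker {K V M : Type*} [DivisionRing K]
    [AddCommGroup V] [Module K V] [AddCommGroup M] [Module K M]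
    (W : Submodule K V) [FiniteDimensional K W] (f : V →ₗ[K] M) :
    finrank K (W.map f) + finrank K ↥(W ⊓ ker f) = finrank K W := by
  have key := (f.domRestrict W).finrank_range_add_finrank_ker
  rwa [range_domRestrict, ker_domRestrict, ← finrank_map_subtype_eq, map_comap_subtype] at key

section SupportedIn

variable {K ι : Type*} [Field K] [Fintype ι] [DecidableEq ι] (s : Finset ι)

theorem mem_iInf_ker_proj_compl {t : ι → K} :
    t ∈ (⨅ i ∈ sᶜ, ker (proj i : (ι → K) →ₗ[K] K)) ↔ ∀ i ∉ s, t i = 0 := by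
  simp [Submodule.mem_iInf]

theorem finrank_iInf_ker_proj_compl :
    finrank K ↥(⨅ i ∈ sᶜ, ker (proj i : (ι → K) →ₗ[K] K)) = s.card := by
  have e := iInfKerProjEquiv K (fun _ : ι => K) (I := (s : Set ι))
    (J := ((sᶜ : Finset ι) : Set ι)) (by simpa using disjoint_compl_right) (by simp)
  exact e.finrank_eq.trans (by simp)

theorem map_linearCombination_iInf_ker_proj_compl {M : Type*} [AddCommGroup M] [Module K M]
    (w : ι → M) :
    (⨅ i ∈ sᶜ, ker (proj i : (ι → K) →ₗ[K] K)).map (Fintype.linearCombination K w) =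
      span K (w '' s) := by
  apply le_antisymm
  · rintro _ ⟨t, ht, rfl⟩
    rw [SetLike.mem_coe, mem_iInf_ker_proj_compl] at ht
    rw [Fintype.linearCombination_apply,
      ← Finset.sum_subset s.subset_univ (fun i _ hi => by simp [ht i hi])]
    exact sum_mem fun i hi => smul_mem _ _ (subset_span ⟨i, hi, rfl⟩)
  · rw [span_le]
    rintro _ ⟨i, hi, rfl⟩
    refine ⟨Pi.single i 1, ?_, by simp⟩
    rw [SetLike.mem_coe, mem_iInf_ker_proj_compl]
    intro j hj
    exact Pi.single_eq_of_ne (by rintro rfl; exact hj hi) _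

theorem finrank_iInf_ker_proj_compl_inf_ker_linearCombination {M : Type*} [AddCommGroup M]
    [Module K M] (w : ι → M) :
    finrank K ↥((⨅ i ∈ sᶜ, ker (proj i : (ι → K) →ₗ[K] K)) ⊓ ker (Fintype.linearCombination K w))
      + finrank K ↥(span K (w '' s)) = s.card := by
  rw [← finrank_iInf_ker_proj_compl (K := K) s, ← map_linearCombination_iInf_ker_proj_compl,
    add_comm]
  exact finrank_map_add_finrank_inf_ker _ _

end SupportedIn

theorem Complex.exp_two_pi_I_mul_mul_eq_self_iff (t : ℝ) (w : ℂ) :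
    exp (2 * Real.pi * I * t) * w = w ↔ w = 0 ∨ ∃ m : ℤ, t = m := by
  have h2piI : (2 * Real.pi * I : ℂ) ≠ 0 := by simp [Real.pi_ne_zero]
  have hexp : exp (2 * Real.pi * I * t) = 1 ↔ ∃ m : ℤ, t = m := by
    simp only [exp_eq_one_iff, mul_comm _ (t : ℂ), mul_left_inj' h2piI]
    exact exists_congr fun m => by norm_cast
  rw [← hexp, ← sub_eq_zero, ← sub_one_mul, mul_eq_zero, sub_eq_zero, or_comm]

theorem Complex.eq_zero_iff_of_sub_eq_half_normSq {a b : ℝ} {w : ℂ}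
    (h : a - b = 1 / 2 * normSq w) : w = 0 ↔ a = b := by
  rw [← normSq_eq_zero]
  constructor <;> intro <;> linarith

theorem LinearMap.pi_sum_smul_proj_eq_linearCombination {K ι κ : Type*} [CommSemiring K]
    [Fintype ι] (a : ι → κ → K) :
    LinearMap.pi (fun j : κ => ∑ i, a i j • (proj i : (ι → K) →ₗ[K] K)) =
      Fintype.linearCombination K a := by
  ext t j
  simp [Fintype.linearCombination_apply, mul_comm]

/-- In the Delzant construction, let `T^n` act on `ℂ^n` in the standard
way and let `A : ℝ^n → 𝔥` send `eᵢ` to the labelling vector `vᵢ`.  Let `(η, z)` be a point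
of the zero level set of the moment map `ψ̃_r` lying over the open face `F = Face I` of the
labelled polyhedron (so `⟨η, vᵢ⟩ − rᵢ = ½|zᵢ|²`, with equality to `0` exactly on `I`).
Then the `T^n`-stabilizer of `z` is exactly the subtorus `T^n_F` generated by the span of
`{eᵢ : i ∈ I}` (described on the covering `ℝ^n` of `T^n`: `t` fixes `z` iff `t i ∈ ℤ` for
all `i ∉ I`); and the Lie algebra of the stabilizer `K_F = ker(Ā_F)` of the corresponding
point of the quotient, namely `{t : supp t ⊆ I, ∑ᵢ tᵢ vᵢ = 0}`, has dimension equal to the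
excess `e_S(F) = #S_F − codim F`. -/
theorem delzant_stabilizer_and_excess
    (k n : ℕ) (v : Fin n → Fin k → ℤ) (r : Fin n → ℝ)
    (I : Finset (Fin n)) (η : Fin k → ℝ) (z : Fin n → ℂ)
    -- (η, z) lies in the zero level set of the moment map ψ̃_r
    (hlevel : ∀ i, (∑ j, η j * (v i j : ℝ)) - r i = (1 / 2) * Complex.normSq (z i))
    -- η lies in the open face F = Face I: the labels tight at η are exactly those in I
    (htightI : ∀ i ∈ I, ∑ j, η j * (v i j : ℝ) = r i)
    (hstrict : ∀ i ∉ I, r i < ∑ j, η j * (v i j : ℝ)) :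
    -- (a) the stabilizer of z in T^n is exactly the subtorus T^n_F
    (∀ t : Fin n → ℝ,
      (∀ i, Complex.exp (2 * (Real.pi : ℂ) * Complex.I * (t i : ℂ)) * z i = z i)
        ↔ ∀ i ∉ I, ∃ m : ℤ, t i = (m : ℝ))
    -- (b) dim K_F = excess of F:  #S_F − codim F, with codim F = rank of {vᵢ : i ∈ I}
    ∧ ((Module.finrank ℝ
        ↥((⨅ i ∈ (Iᶜ : Finset (Fin n)),
              LinearMap.ker (LinearMap.proj i : (Fin n → ℝ) →ₗ[ℝ] ℝ)) ⊓
           LinearMap.ker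
             (LinearMap.pi (fun j : Fin k =>
               ∑ i : Fin n, ((v i j : ℝ)) • (LinearMap.proj i : (Fin n → ℝ) →ₗ[ℝ] ℝ)))) : ℤ)
      = (I.card : ℤ) -
        (Module.finrank ℝ
          ↥(Submodule.span ℝ ((fun i => fun j => (v i j : ℝ)) '' (I : Set (Fin n)))) : ℤ)) := by
  have hzero : ∀ i, z i = 0 ↔ i ∈ I := fun i => by
    rw [Complex.eq_zero_iff_of_sub_eq_half_normSq (hlevel i)]
    by_cases hi : i ∈ I
    · simp [hi, htightI i hi]
    · simp [hi, (hstrict i hi).ne']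
  refine ⟨fun t => ?_, ?_⟩
  · simp only [Complex.exp_two_pi_I_mul_mul_eq_self_iff, hzero, or_iff_not_imp_left]
  · have hdim := finrank_iInf_ker_proj_compl_inf_ker_linearCombination (K := ℝ) I
      (fun i j => (v i j : ℝ))
    rw [pi_sum_smul_proj_eq_linearCombination]
    omega
end

section
/- Let H = ℝ^k/ℤ^k be a torus and S a finite set of labels with associated polyhedron P. If (S,P) is simple (for every open face F, the labelling vectors in S_F are linearly independent), then 0 is a regular value of the moment map ψ̃_r on T*H × ℂⁿ; and if moreover for every open face F the vectors in S_F form a ℤ-basis of the lattice Λ ∩ 𝔥_F (simply laced case), then T^n acts freely on ψ̃_r^{-1}(0), i.e., all the groups K_F are trivial. -/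
open scoped Classical

lemma aux_dual_surj {k : ℕ} {ι : Type} [Fintype ι] (u : ι → Fin k → ℝ)
    (h : LinearIndependent ℝ u) (y : ι → ℝ) :
    ∃ η : Fin k → ℝ, ∀ i, ∑ j, η j * u i j = y i := by
  classical
  set f : (ι → ℝ) →ₗ[ℝ] (Fin k → ℝ) := Module.piEquiv ι ℝ (Fin k → ℝ) u with hf
  have hker : ∀ c, f c = 0 → c = 0 := by
    intro c hc
    have := Fintype.linearIndependent_iff.mp h c
    rw [hf, Module.piEquiv_apply_apply] at hc
    funext i; exact this hc i
  have hinj : Function.Injective f :=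
    LinearMap.ker_eq_bot.mp (LinearMap.ker_eq_bot'.mpr hker)
  obtain ⟨ξ, hξ⟩ := LinearMap.dualMap_surjective_of_injective hinj
    (∑ i : ι, y i • LinearMap.proj i)
  refine ⟨fun j => ξ (Pi.single j 1), fun i => ?_⟩
  have h1 : ξ (u i) = ∑ j, u i j * ξ (Pi.single j 1) := by
    conv_lhs => rw [pi_eq_sum_univ (u i)]
    rw [map_sum]
    simp only [map_smul, smul_eq_mul]
    refine Finset.sum_congr rfl fun j _ => ?_
    congr 2
    funext x
    simp [Pi.single_apply, eq_comm]
  have h2 : f (Pi.single i 1) = u i := by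
    rw [hf, Module.piEquiv_apply_apply]
    simp [Pi.single_apply, Finset.sum_ite_eq']
  have h3 := congrArg (fun g => g (Pi.single i (1:ℝ))) hξ
  simp only [LinearMap.dualMap_apply, LinearMap.sum_apply, LinearMap.smul_apply,
    LinearMap.proj_apply, LinearMap.comp_apply] at h3
  rw [h2] at h3
  have h4 : (∑ i' : ι, y i' • Pi.single i (1:ℝ) i') = y i := by
    simp [Pi.single_apply, smul_eq_mul]
  rw [h4] at h3
  rw [← h3, h1]
  exact Finset.sum_congr rfl fun j _ => mul_comm _ _

lemma aux_int_of_exp (t : ℝ) (z : ℂ) (hz : z ≠ 0)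
    (h : Complex.exp (2 * (Real.pi : ℂ) * Complex.I * (t : ℂ)) * z = z) :
    ∃ m : ℤ, t = (m : ℝ) := by
  have h1 : Complex.exp (2 * (Real.pi : ℂ) * Complex.I * (t : ℂ)) = 1 :=
    mul_right_cancel₀ hz (h.trans (one_mul z).symm)
  obtain ⟨m, hm⟩ := Complex.exp_eq_one_iff.mp h1
  refine ⟨m, ?_⟩
  have hne : (2 * (Real.pi : ℂ) * Complex.I) ≠ 0 := by
    refine mul_ne_zero (mul_ne_zero two_ne_zero ?_) Complex.I_ne_zero
    exact_mod_cast Real.pi_ne_zero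
  have h2 : (t : ℂ) = (m : ℂ) := by
    have : (2 * (Real.pi : ℂ) * Complex.I) * (t : ℂ) =
        (2 * (Real.pi : ℂ) * Complex.I) * (m : ℂ) := by rw [hm]; ring
    exact mul_left_cancel₀ hne this
  exact_mod_cast h2

/-- Let `H = ℝ^k/ℤ^k` be a torus and `S = {(vᵢ, rᵢ)}` a finite set of
labels with associated polyhedron `P` (open faces `Face I` parametrized by the sets of
tight labels).  Consider the moment map `ψ̃_r` on `T*H × ℂ^n ≅ (ℝ^k × ℝ^k) × ℂ^n`, with
`ψ̃_r(h, η, z) i = ⟨η, vᵢ⟩ − rᵢ − ½|zᵢ|²`.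
(1) If `(S, P)` is simple — for every nonempty open face `F` the labelling vectors in
`S_F` are linearly independent — then `0` is a regular value of `ψ̃_r`.
(2) If moreover for every nonempty open face `F` the vectors in `S_F` generate the lattice
`Λ ∩ 𝔥_F` over `ℤ` (the simply laced case), then `T^n` acts freely on `ψ̃_r⁻¹(0)`:
any `t ∈ ℝ^n` acting trivially on a point of the zero level set (i.e. with `Ā(t) = 0` in
`H` and fixing `z`) lies in `ℤ^n`. -/
theorem delzant_simple_regular_and_simply_laced_free
    (k n : ℕ) (v : Fin n → Fin k → ℤ) (hv : ∀ i, v i ≠ 0) (r : Fin n → ℝ)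
    (Face : Finset (Fin n) → Set (Fin k → ℝ))
    (hFace : ∀ I, Face I = {μ : Fin k → ℝ |
        (∀ i ∈ I, ∑ j, μ j * (v i j : ℝ) = r i) ∧
        (∀ i ∉ I, r i < ∑ j, μ j * (v i j : ℝ))})
    (ψ : ((Fin k → ℝ) × (Fin k → ℝ) × (Fin n → ℂ)) → (Fin n → ℝ))
    (hψ : ∀ x, ψ x = fun i =>
      (∑ j, x.2.1 j * (v i j : ℝ)) - r i - (1 / 2) * Complex.normSq (x.2.2 i)) :
    -- (1) simplicity implies 0 is a regular value of ψ
    ((∀ I : Finset (Fin n), (Face I).Nonempty →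
        LinearIndependent ℝ (fun i : {i // i ∈ I} => (fun j => (v (i : Fin n) j : ℝ)))) →
      ∀ x, ψ x = 0 → Function.Surjective (fderiv ℝ ψ x))
    -- (2) the simply laced condition implies the T^n-action on ψ⁻¹(0) is free
    ∧ ((∀ I : Finset (Fin n), (Face I).Nonempty →
          LinearIndependent ℝ (fun i : {i // i ∈ I} => (fun j => (v (i : Fin n) j : ℝ)))) →
       (∀ I : Finset (Fin n), (Face I).Nonempty →
          ∀ w : Fin k → ℤ,
            ((fun j => (w j : ℝ)) ∈
              Submodule.span ℝ ((fun i => fun j => (v i j : ℝ)) '' (I : Set (Fin n)))) →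
            ∃ c : Fin n → ℤ, (∀ i ∉ I, c i = 0) ∧ ∀ j, w j = ∑ i, c i * v i j) →
       ∀ x, ψ x = 0 →
         ∀ t : Fin n → ℝ,
           (∀ j, ∃ m : ℤ, (∑ i, t i * (v i j : ℝ)) = (m : ℝ)) →
           (∀ i, Complex.exp (2 * (Real.pi : ℂ) * Complex.I * (t i : ℂ)) * x.2.2 i = x.2.2 i) →
           ∀ i, ∃ m : ℤ, t i = (m : ℝ)) := by
  classical
  have face_ne : ∀ x : ((Fin k → ℝ) × (Fin k → ℝ) × (Fin n → ℂ)), ψ x = 0 →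
      (Face (Finset.univ.filter (fun i => x.2.2 i = 0))).Nonempty := by
    intro x hx
    have hx' : ∀ i, (∑ j, x.2.1 j * (v i j : ℝ)) - r i
        - (1/2) * Complex.normSq (x.2.2 i) = 0 := by
      intro i
      have h0 := hψ x
      rw [h0] at hx
      exact congrFun hx i
    refine ⟨x.2.1, ?_⟩
    rw [hFace]
    constructor
    · intro i hi
      have hz : x.2.2 i = 0 := by simpa using hi
      have := hx' i
      rw [hz] at this
      simp at this
      linarith
    · intro i hi
      have hz : x.2.2 i ≠ 0 := by simpa using hi
      have hpos : 0 < Complex.normSq (x.2.2 i) := Complex.normSq_pos.mpr hz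
      have := hx' i
      linarith
  constructor
  · -- Part 1
    intro hsimple x hx
    set I : Finset (Fin n) := Finset.univ.filter (fun i => x.2.2 i = 0) with hI
    have hne : (Face I).Nonempty := face_ne x hx
    have hli := hsimple I hne
    -- the candidate derivative
    let D : ((Fin k → ℝ) × (Fin k → ℝ) × (Fin n → ℂ)) →ₗ[ℝ] (Fin n → ℝ) :=
      { toFun := fun δ i => (∑ j, δ.2.1 j * (v i j : ℝ)) -
          ((x.2.2 i).re * (δ.2.2 i).re + (x.2.2 i).im * (δ.2.2 i).im)
        map_add' := by
          intro a b
          funext i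
          simp only [Prod.snd_add, Prod.fst_add, Pi.add_apply, Complex.add_re, Complex.add_im,
            add_mul, Finset.sum_add_distrib]
          ring
        map_smul' := by
          intro c a
          funext i
          simp only [Prod.smul_snd, Prod.smul_fst, Pi.smul_apply, smul_eq_mul,
            Complex.smul_re, Complex.smul_im, RingHom.id_apply]
          rw [show (∑ j, c * a.2.1 j * (v i j : ℝ)) = c * ∑ j, a.2.1 j * (v i j : ℝ) by
            rw [Finset.mul_sum]; exact Finset.sum_congr rfl fun j _ => by ring]
          ring }
    have hD : HasFDerivAt ψ (LinearMap.toContinuousLinearMap D) x := by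
      have hψ' : ψ = fun y : ((Fin k → ℝ) × (Fin k → ℝ) × (Fin n → ℂ)) => fun i =>
          (∑ j, y.2.1 j * (v i j : ℝ)) - r i - (1/2) * Complex.normSq (y.2.2 i) :=
        funext hψ
      rw [hψ']
      apply hasFDerivAt_pi''
      intro i
      set Pj : Fin k → (((Fin k → ℝ) × (Fin k → ℝ) × (Fin n → ℂ)) →L[ℝ] ℝ) := fun j =>
        (ContinuousLinearMap.proj j).comp
          ((ContinuousLinearMap.fst ℝ (Fin k → ℝ) (Fin n → ℂ)).comp
            (ContinuousLinearMap.snd ℝ (Fin k → ℝ) ((Fin k → ℝ) × (Fin n → ℂ)))) with hPj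
      set Mi : ((Fin k → ℝ) × (Fin k → ℝ) × (Fin n → ℂ)) →L[ℝ] ℂ :=
        (ContinuousLinearMap.proj i).comp
          ((ContinuousLinearMap.snd ℝ (Fin k → ℝ) (Fin n → ℂ)).comp
            (ContinuousLinearMap.snd ℝ (Fin k → ℝ) ((Fin k → ℝ) × (Fin n → ℂ)))) with hMi
      set Re : ((Fin k → ℝ) × (Fin k → ℝ) × (Fin n → ℂ)) →L[ℝ] ℝ :=
        Complex.reCLM.comp Mi with hRe
      set Im : ((Fin k → ℝ) × (Fin k → ℝ) × (Fin n → ℂ)) →L[ℝ] ℝ :=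
        Complex.imCLM.comp Mi with hIm
      have hA : HasFDerivAt
          (fun y : ((Fin k → ℝ) × (Fin k → ℝ) × (Fin n → ℂ)) => ∑ j, y.2.1 j * (v i j : ℝ))
          (∑ j, (v i j : ℝ) • Pj j) x := by
        apply HasFDerivAt.fun_sum
        intro j _
        exact ((Pj j).hasFDerivAt).mul_const ((v i j : ℝ))
      have hB : HasFDerivAt
          (fun y : ((Fin k → ℝ) × (Fin k → ℝ) × (Fin n → ℂ)) => Complex.normSq (y.2.2 i))
          ((Re x • Re + Re x • Re) + (Im x • Im + Im x • Im)) x := by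
        have hfun : (fun y : ((Fin k → ℝ) × (Fin k → ℝ) × (Fin n → ℂ)) =>
            Complex.normSq (y.2.2 i)) = fun y => Re y * Re y + Im y * Im y := by
          funext y
          simp [hRe, hIm, hMi, Complex.normSq_apply]
        rw [hfun]
        exact (Re.hasFDerivAt.mul Re.hasFDerivAt).add (Im.hasFDerivAt.mul Im.hasFDerivAt)
      have hcomb := (hA.sub_const (r i)).sub (hB.const_mul ((1:ℝ)/2))
      have heq : (ContinuousLinearMap.proj i).comp (LinearMap.toContinuousLinearMap D) =
          (∑ j, (v i j : ℝ) • Pj j) -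
            ((1:ℝ)/2) • ((Re x • Re + Re x • Re) + (Im x • Im + Im x • Im)) := by
        refine ContinuousLinearMap.ext fun δ => ?_
        simp only [ContinuousLinearMap.comp_apply, ContinuousLinearMap.proj_apply,
          ContinuousLinearMap.sub_apply, ContinuousLinearMap.smul_apply,
          ContinuousLinearMap.add_apply, ContinuousLinearMap.sum_apply,
          LinearMap.coe_toContinuousLinearMap', hPj, hRe, hIm, hMi,
          ContinuousLinearMap.coe_comp', Function.comp_apply,
          ContinuousLinearMap.coe_fst', ContinuousLinearMap.coe_snd',
          Complex.reCLM_apply, Complex.imCLM_apply, smul_eq_mul]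
        simp only [D, LinearMap.coe_mk, AddHom.coe_mk]
        rw [show (∑ j, (v i j : ℝ) * δ.2.1 j) = ∑ j, δ.2.1 j * (v i j : ℝ) from
          Finset.sum_congr rfl fun j _ => mul_comm _ _]
        ring
      rw [heq]
      exact hcomb
    rw [hD.fderiv]
    intro y
    obtain ⟨η, hη⟩ := aux_dual_surj (fun i : {i // i ∈ I} => fun j => (v (i : Fin n) j : ℝ))
      hli (fun i => y (i : Fin n))
    refine ⟨(0, η, fun i => if x.2.2 i = 0 then 0 else
      (((∑ j, η j * (v i j : ℝ)) - y i) / Complex.normSq (x.2.2 i)) • x.2.2 i), ?_⟩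
    rw [LinearMap.coe_toContinuousLinearMap']
    funext i
    show (∑ j, η j * (v i j : ℝ)) - ((x.2.2 i).re * _ + (x.2.2 i).im * _) = y i
    by_cases hzi : x.2.2 i = 0
    · have hiI : i ∈ I := by simp [hI, hzi]
      have := hη ⟨i, hiI⟩
      simp only [if_pos hzi, Complex.zero_re, Complex.zero_im, mul_zero, add_zero, sub_zero]
      simpa using this
    · have hpos : Complex.normSq (x.2.2 i) ≠ 0 := by
        simpa [Complex.normSq_eq_zero] using hzi
      simp only [if_neg hzi, Complex.smul_re, Complex.smul_im, smul_eq_mul]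
      rw [Complex.normSq_apply] at hpos ⊢
      have hpos2 : (x.2.2 i).re ^ 2 + (x.2.2 i).im ^ 2 ≠ 0 := by rw [sq, sq]; exact hpos
      field_simp
      ring
  · -- Part 2
    intro hsimple hlat x hx t ht hzfix i
    set I : Finset (Fin n) := Finset.univ.filter (fun i => x.2.2 i = 0) with hI
    have hne : (Face I).Nonempty := face_ne x hx
    have hli := hsimple I hne
    have hout : ∀ i', x.2.2 i' ≠ 0 → ∃ m : ℤ, t i' = (m : ℝ) := fun i' h =>
      aux_int_of_exp (t i') (x.2.2 i') h (hzfix i')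
    by_cases hzi : x.2.2 i = 0
    · -- i ∈ I; use the lattice condition
      choose m hm using ht
      let c' : Fin n → ℤ := fun i' =>
        if h : x.2.2 i' = 0 then 0 else Classical.choose (hout i' h)
      have hc' : ∀ i', x.2.2 i' ≠ 0 → t i' = (c' i' : ℝ) := by
        intro i' h
        simp only [c', dif_neg h]
        exact Classical.choose_spec (hout i' h)
      let w : Fin k → ℤ := fun j => m j - ∑ i' ∈ Finset.univ \ I, c' i' * v i' j
      have hw : ∀ j, (w j : ℝ) = ∑ i' ∈ I, t i' * (v i' j : ℝ) := by
        intro j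
        have hsplit : (∑ i', t i' * (v i' j : ℝ)) =
            (∑ i' ∈ I, t i' * (v i' j : ℝ)) + ∑ i' ∈ Finset.univ \ I, t i' * (v i' j : ℝ) := by
          rw [add_comm, Finset.sum_sdiff (Finset.subset_univ I)]
        have hrest : (∑ i' ∈ Finset.univ \ I, t i' * (v i' j : ℝ)) =
            ∑ i' ∈ Finset.univ \ I, (c' i' : ℝ) * (v i' j : ℝ) := by
          refine Finset.sum_congr rfl fun i' hi' => ?_
          have hzi' : x.2.2 i' ≠ 0 := by
            intro h0
            have hmemI : i' ∈ I := by simp [hI, h0]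
            exact (Finset.mem_sdiff.mp hi').2 hmemI
          rw [hc' i' hzi']
        push_cast [w]
        rw [← hm j, hsplit, hrest]
        push_cast
        ring
      have hmem : (fun j => (w j : ℝ)) ∈
          Submodule.span ℝ ((fun i => fun j => (v i j : ℝ)) '' (I : Set (Fin n))) := by
        have : (fun j => (w j : ℝ)) =
            ∑ i' ∈ I, t i' • (fun j => (v i' j : ℝ)) := by
          funext j
          rw [hw j]
          simp [Finset.sum_apply]
        rw [this]
        refine Submodule.sum_mem _ fun i' hi' => ?_
        exact Submodule.smul_mem _ _ (Submodule.subset_span ⟨i', hi', rfl⟩)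
      obtain ⟨c, hc0, hcw⟩ := hlat I hne w hmem
      -- linear independence forces t = c on I
      have hsum : (∑ i' : {i // i ∈ I}, (t (i' : Fin n) - (c (i' : Fin n) : ℝ)) •
          (fun j => (v (i' : Fin n) j : ℝ))) = 0 := by
        rw [Finset.sum_coe_sort I (fun i' => (t i' - (c i' : ℝ)) • (fun j => (v i' j : ℝ)))]
        funext j
        simp only [Finset.sum_apply, Pi.smul_apply, smul_eq_mul, Pi.zero_apply]
        have h1 : (∑ i' ∈ I, (c i' : ℝ) * (v i' j : ℝ)) = (w j : ℝ) := by
          have h2 : (∑ i' ∈ I, (c i' : ℝ) * (v i' j : ℝ)) = ∑ i', (c i' : ℝ) * (v i' j : ℝ) :=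
            Finset.sum_subset (Finset.subset_univ I) (fun i' _ hi' => by rw [hc0 i' hi']; simp)
          rw [h2]
          exact_mod_cast (hcw j).symm
        calc (∑ i' ∈ I, (t i' - (c i' : ℝ)) * (v i' j : ℝ))
            = (∑ i' ∈ I, t i' * (v i' j : ℝ)) - ∑ i' ∈ I, (c i' : ℝ) * (v i' j : ℝ) := by
              rw [← Finset.sum_sub_distrib]
              exact Finset.sum_congr rfl fun _ _ => by ring
          _ = 0 := by rw [h1, hw j]; ring
      have := Fintype.linearIndependent_iff.mp hli
        (fun i' : {i // i ∈ I} => t (i' : Fin n) - (c (i' : Fin n) : ℝ)) hsum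
      have hiI : i ∈ I := by simp [hI, hzi]
      have hti : t i - (c i : ℝ) = 0 := by simpa using this ⟨i, hiI⟩
      exact ⟨c i, by linarith⟩
    · exact hout i hzi
end

section
/- Let P ⊆ t* be the polyhedron of a set of labels of constant excess and let Δ be a compact convex set stratified by 'virtual open faces' Φ(M_β), each being the relative interior of a polytope with affine span μ_β + t_β⁰ for a subspace t_β ⊆ t. Then P is admissible (i.e., t_m ∩ t_F = 0 whenever the corresponding point lies in a common face F) if and only if every open face of P meets every virtual open face transversely; in particular, for a fixed finite collection of virtual faces, admissibility holds for a generic translate of P. -/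
open scoped Classical


section helpers

variable {k : ℕ}

/-- The dot-pairing `x ↦ ∑ j, x j • proj j` as a linear map to the dual. -/
noncomputable def dotL (k : ℕ) : (Fin k → ℝ) →ₗ[ℝ] Module.Dual ℝ (Fin k → ℝ) where
  toFun x := ∑ j, x j • (LinearMap.proj j : (Fin k → ℝ) →ₗ[ℝ] ℝ)
  map_add' x y := by
    simp [add_smul, Finset.sum_add_distrib]
  map_smul' c x := by
    simp [smul_smul, Finset.smul_sum]

lemma dotL_apply (x y : Fin k → ℝ) : dotL k x y = ∑ j, x j * y j := by
  simp [dotL]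

lemma dotL_injective : Function.Injective (dotL k) := by
  refine (injective_iff_map_eq_zero (dotL k)).2 (fun x hx => ?_)
  have h2 : ∑ j, x j * x j = 0 := by
    have := DFunLike.congr_fun hx x
    rwa [dotL_apply] at this
  have h3 := (Finset.sum_eq_zero_iff_of_nonneg
    (fun j _ => mul_self_nonneg (x j))).1 h2
  funext j
  exact mul_self_eq_zero.1 (h3 j (Finset.mem_univ j))

lemma dotL_bijective : Function.Bijective (dotL k) :=
  ⟨dotL_injective, (LinearMap.injective_iff_surjective_of_finrank_eq_finrank
      (Subspace.dual_finrank_eq (V := Fin k → ℝ)).symm).1 dotL_injective⟩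

noncomputable def dotE (k : ℕ) : (Fin k → ℝ) ≃ₗ[ℝ] Module.Dual ℝ (Fin k → ℝ) :=
  LinearEquiv.ofBijective (dotL k) dotL_bijective

/-- Our stand-in for the annihilator. -/
noncomputable def myAnn (S : Submodule ℝ (Fin k → ℝ)) : Submodule ℝ (Fin k → ℝ) :=
  Submodule.comap (dotE k : (Fin k → ℝ) →ₗ[ℝ] Module.Dual ℝ (Fin k → ℝ)) S.dualAnnihilator

lemma mem_myAnn_iff {S : Submodule ℝ (Fin k → ℝ)} {y : Fin k → ℝ} :
    y ∈ myAnn S ↔ ∀ x ∈ S, ∑ j, x j * y j = 0 := by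
  simp only [myAnn, Submodule.mem_comap, Submodule.mem_dualAnnihilator]
  have key : ∀ x : Fin k → ℝ,
      ((dotE k : (Fin k → ℝ) →ₗ[ℝ] Module.Dual ℝ (Fin k → ℝ)) y) x = ∑ j, x j * y j := by
    intro x
    have h1 : ((dotE k : (Fin k → ℝ) →ₗ[ℝ] Module.Dual ℝ (Fin k → ℝ)) y) x = dotL k y x := rfl
    rw [h1, dotL_apply]
    exact Finset.sum_congr rfl (fun j _ => mul_comm (y j) (x j))
  constructor
  · exact fun h x hx => (key x) ▸ h x hx
  · intro h x hx; rw [key x]; exact h x hx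

lemma myAnn_sup_eq_top_iff (A B : Submodule ℝ (Fin k → ℝ)) :
    myAnn A ⊔ myAnn B = ⊤ ↔ A ⊓ B = ⊥ := by
  have hsymm : ∀ S : Submodule ℝ (Fin k → ℝ),
      myAnn S = (Submodule.orderIsoMapComap (dotE k)).symm S.dualAnnihilator := by
    intro S
    rw [Submodule.orderIsoMapComap_symm_apply]
    rfl
  rw [hsymm, hsymm, ← map_sup, ← Subspace.dualAnnihilator_inf_eq]
  rw [← map_top (Submodule.orderIsoMapComap (dotE k)).symm]
  rw [(Submodule.orderIsoMapComap (dotE k)).symm.injective.eq_iff]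
  rw [← Submodule.dualAnnihilator_bot, Subspace.dualAnnihilator_inj]

end helpers

/-- Let `P ⊆ t* ≅ ℝ^k` be the polyhedron of a set of labels of constant
excess, with open faces `Face c I` (for the translate `P + c`) parametrized by their tight
sets `I`, and for each open face let `t_F = span{vᵢ : i ∈ I} ⊆ t`.  Let a finite family of
"virtual open faces" `Vface β` be given, each contained in the affine subspace
`μβ + (tβ)⁰` for a subspace `tβ ⊆ t` (their union being compact, with the frontier
condition that `tβ` increases on boundary strata).  A translate `P + c` is admissible iff
`tβ ⊓ t_F = 0` whenever `Vface β` meets the open face `F` of `P + c`.  Then: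
`P` is admissible iff every open face of `P` meets every virtual open face transversely
(i.e. the annihilators span: `(tβ)⁰ + (t_F)⁰ = t*`); and the set of translation vectors `c`
for which `P + c` is admissible is open and dense. -/
theorem admissibility_iff_transversality_and_generic
    (k n N : ℕ) (v : Fin n → Fin k → ℝ) (hv : ∀ i, v i ≠ 0) (r : Fin n → ℝ)
    (Face : (Fin k → ℝ) → Finset (Fin n) → Set (Fin k → ℝ))
    (hFace : ∀ c I, Face c I = {μ : Fin k → ℝ |
        (∀ i ∈ I, ∑ j, μ j * v i j = r i + ∑ j, c j * v i j) ∧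
        (∀ i ∉ I, r i + ∑ j, c j * v i j < ∑ j, μ j * v i j)})
    -- annihilator (with respect to the dot pairing between t and t*)
    (ann : Submodule ℝ (Fin k → ℝ) → Submodule ℝ (Fin k → ℝ))
    (hann : ∀ S, ann S = ⨅ x ∈ S,
        LinearMap.ker (∑ j, x j • (LinearMap.proj j : (Fin k → ℝ) →ₗ[ℝ] ℝ)))
    (tF : Finset (Fin n) → Submodule ℝ (Fin k → ℝ))
    (htF : ∀ I, tF I = Submodule.span ℝ (v '' (I : Set (Fin n))))
    -- constant excess of the label set
    (hconst : ∀ I I' : Finset (Fin n), (Face 0 I).Nonempty → (Face 0 I').Nonempty →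
        (I.card : ℤ) - (Module.finrank ℝ ↥(tF I) : ℤ)
          = (I'.card : ℤ) - (Module.finrank ℝ ↥(tF I') : ℤ))
    -- the virtual open faces
    (μβ : Fin N → (Fin k → ℝ)) (tβ : Fin N → Submodule ℝ (Fin k → ℝ))
    (Vface : Fin N → Set (Fin k → ℝ))
    (haff : ∀ β, ∀ x ∈ Vface β, x - μβ β ∈ ann (tβ β))
    (hcpt : IsCompact (⋃ β, Vface β))
    (hfrontier : ∀ β β', (Vface β' ∩ closure (Vface β)).Nonempty → tβ β ≤ tβ β')
    -- admissibility of the translate P + c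
    (Adm : (Fin k → ℝ) → Prop)
    (hAdm : ∀ c, Adm c ↔ ∀ (β : Fin N) (I : Finset (Fin n)),
        (Vface β ∩ Face c I).Nonempty → tβ β ⊓ tF I = ⊥) :
    (Adm 0 ↔ ∀ (β : Fin N) (I : Finset (Fin n)),
        (Vface β ∩ Face 0 I).Nonempty → ann (tβ β) ⊔ ann (tF I) = ⊤)
    ∧ IsOpen {c | Adm c} ∧ Dense {c | Adm c} := by
  classical
  -- identify `ann` with `myAnn`
  have hann' : ∀ S, ann S = myAnn S := by
    intro S
    ext y
    rw [hann, mem_myAnn_iff]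
    simp only [Submodule.mem_iInf, LinearMap.mem_ker]
    constructor
    · intro h x hx
      have h2 := h x hx
      rwa [show ((∑ j, x j • (LinearMap.proj j : (Fin k → ℝ) →ₗ[ℝ] ℝ)) y) = ∑ j, x j * y j
        from dotL_apply x y] at h2
    · intro h x hx
      rw [show ((∑ j, x j • (LinearMap.proj j : (Fin k → ℝ) →ₗ[ℝ] ℝ)) y) = ∑ j, x j * y j
        from dotL_apply x y]
      exact h x hx
  have key : ∀ A B : Submodule ℝ (Fin k → ℝ), (ann A ⊔ ann B = ⊤ ↔ A ⊓ B = ⊥) := by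
    intro A B
    rw [hann', hann']
    exact myAnn_sup_eq_top_iff A B
  -- the linear functionals
  set L : Fin n → (Fin k → ℝ) → ℝ := fun i μ => ∑ j, μ j * v i j with hL
  have hLcont : ∀ i, Continuous (L i) := by
    intro i
    exact continuous_finset_sum _ fun j _ => (continuous_apply j).mul continuous_const
  have memFace : ∀ (c : Fin k → ℝ) I (x : Fin k → ℝ), x ∈ Face c I ↔
      (∀ i ∈ I, L i x = r i + L i c) ∧ (∀ i ∉ I, r i + L i c < L i x) := by
    intro c I x
    rw [hFace]
    exact Iff.rfl
  have hLsub : ∀ i (x c : Fin k → ℝ), L i (x - c) = L i x - L i c := by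
    intro i x c
    simp only [hL, Pi.sub_apply, sub_mul]
    rw [Finset.sum_sub_distrib]
  have hL0 : ∀ i, L i (0 : Fin k → ℝ) = 0 := by
    intro i; simp [hL]
  have hFaceSub : ∀ (c : Fin k → ℝ) I (x : Fin k → ℝ), x ∈ Face c I ↔ x - c ∈ Face 0 I := by
    intro c I x
    rw [memFace, memFace]
    constructor
    · rintro ⟨h1, h2⟩
      refine ⟨fun i hi => ?_, fun i hi => ?_⟩
      · rw [hLsub, hL0, h1 i hi]; ring
      · rw [hLsub, hL0]; have := h2 i hi; linarith
    · rintro ⟨h1, h2⟩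
      refine ⟨fun i hi => ?_, fun i hi => ?_⟩
      · have := h1 i hi; rw [hLsub, hL0] at this; linarith
      · have := h2 i hi; rw [hLsub, hL0] at this; linarith
  have hmem_tF : ∀ I (y : Fin k → ℝ), y ∈ ann (tF I) ↔ ∀ i ∈ I, ∑ j, v i j * y j = 0 := by
    intro I y
    rw [hann', mem_myAnn_iff, htF]
    constructor
    · intro h i hi
      exact h (v i) (Submodule.subset_span ⟨i, hi, rfl⟩)
    · intro h x hx
      have hle : Submodule.span ℝ (v '' (I : Set (Fin n))) ≤
          LinearMap.ker ((dotL k).flip y) := by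
        rw [Submodule.span_le]
        rintro _ ⟨i, hi, rfl⟩
        simp only [SetLike.mem_coe, LinearMap.mem_ker, LinearMap.flip_apply, dotL_apply]
        exact h i hi
      have := hle hx
      rw [LinearMap.mem_ker, LinearMap.flip_apply, dotL_apply] at this
      exact this
  have htFmono : ∀ I I' : Finset (Fin n), I ⊆ I' → tF I ≤ tF I' := by
    intro I I' hII'
    rw [htF, htF]
    exact Submodule.span_mono (Set.image_mono (by exact_mod_cast hII'))
  -- the bad set
  set B : Set (Fin k → ℝ) :=
    {c | ∃ β I, (Vface β ∩ Face c I).Nonempty ∧ tβ β ⊓ tF I ≠ ⊥} with hB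
  have hAdmB : {c | Adm c} = Bᶜ := by
    ext c
    simp only [Set.mem_setOf_eq, Set.mem_compl_iff, hB]
    constructor
    · rintro h ⟨β, I, hne, hbad⟩
      exact hbad ((hAdm c).1 h β I hne)
    · intro h
      rw [hAdm]
      intro β I hne
      by_contra hbad
      exact h ⟨β, I, hne, hbad⟩
  -- closedness of the bad set
  have hBclosed : IsClosed B := by
    have hcover : B = ⋃ p : Fin N × Finset (Fin n),
        {c | (Vface p.1 ∩ Face c p.2).Nonempty ∧ tβ p.1 ⊓ tF p.2 ≠ ⊥} := by
      ext c
      simp only [hB, Set.mem_setOf_eq, Set.mem_iUnion, Prod.exists]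
    apply isClosed_of_closure_subset
    rw [hcover, closure_iUnion_of_finite]
    rintro c hc
    simp only [Set.mem_iUnion] at hc
    obtain ⟨⟨β, I⟩, hc⟩ := hc
    obtain ⟨u, hu, hulim⟩ := mem_closure_iff_seq_limit.1 hc
    have hbad : tβ β ⊓ tF I ≠ ⊥ := (hu 0).2
    choose x hx1 hx2 using fun m => (hu m).1
    have hxU : ∀ m, x m ∈ ⋃ β', Vface β' := fun m => Set.mem_iUnion.2 ⟨β, (hx1 m)⟩
    obtain ⟨y, hyU, φ, hφ, hylim⟩ := hcpt.tendsto_subseq hxU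
    obtain ⟨β', hyβ'⟩ := Set.mem_iUnion.1 hyU
    have hyc : y ∈ closure (Vface β) :=
      mem_closure_of_tendsto hylim (Filter.Eventually.of_forall (fun m => hx1 (φ m)))
    have hle : tβ β ≤ tβ β' := hfrontier β β' ⟨y, hyβ', hyc⟩
    have hclim : Filter.Tendsto (fun m => u (φ m)) Filter.atTop (nhds c) :=
      hulim.comp hφ.tendsto_atTop
    have h1 : ∀ i, Filter.Tendsto (fun m => L i (x (φ m))) Filter.atTop (nhds (L i y)) :=
      fun i => ((hLcont i).tendsto y).comp hylim
    have h2 : ∀ i, Filter.Tendsto (fun m => r i + L i (u (φ m))) Filter.atTop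
        (nhds (r i + L i c)) :=
      fun i => tendsto_const_nhds.add (((hLcont i).tendsto c).comp hclim)
    have heq : ∀ i ∈ I, L i y = r i + L i c := by
      intro i hi
      refine tendsto_nhds_unique ?_ (h2 i)
      have h3 : (fun m => L i (x (φ m))) = fun m => r i + L i (u (φ m)) :=
        funext fun m => ((memFace _ _ _).1 (hx2 (φ m))).1 i hi
      exact h3 ▸ h1 i
    have hge : ∀ i ∉ I, r i + L i c ≤ L i y := by
      intro i hi
      exact le_of_tendsto_of_tendsto' (h2 i) (h1 i)
        (fun m => le_of_lt (((memFace _ _ _).1 (hx2 (φ m))).2 i hi))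
    set I' : Finset (Fin n) := Finset.univ.filter (fun i => L i y = r i + L i c) with hI'
    have hII' : I ⊆ I' := fun i hi => Finset.mem_filter.2 ⟨Finset.mem_univ i, heq i hi⟩
    have hyF : y ∈ Face c I' := by
      rw [memFace]
      refine ⟨fun i hi => (Finset.mem_filter.1 hi).2, fun i hi => ?_⟩
      have hne : L i y ≠ r i + L i c := fun h =>
        hi (Finset.mem_filter.2 ⟨Finset.mem_univ i, h⟩)
      have hiI : i ∉ I := fun h => hi (hII' h)
      exact lt_of_le_of_ne (hge i hiI) (Ne.symm hne)
    refine Set.mem_iUnion.2 ⟨(β', I'), ⟨⟨y, hyβ', hyF⟩, fun hbot => hbad ?_⟩⟩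
    rw [← le_bot_iff]
    calc tβ β ⊓ tF I ≤ tβ β' ⊓ tF I' := inf_le_inf hle (htFmono I I' hII')
      _ = ⊥ := hbot
  -- density of the good set
  have hDense : Dense {c | Adm c} := by
    rw [hAdmB]
    set T : Fin N × Finset (Fin n) → Set (Fin k → ℝ) := fun p =>
      if h : tβ p.1 ⊓ tF p.2 ≠ ⊥ ∧ (Face 0 p.2).Nonempty then
        {c | c - (μβ p.1 - h.2.choose) ∈
          (ann (tβ p.1) ⊔ ann (tF p.2) : Submodule ℝ (Fin k → ℝ))}
      else ∅ with hT
    have hTprop : ∀ p, IsClosed (T p) ∧ interior (T p) = ∅ := by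
      intro p
      by_cases h : tβ p.1 ⊓ tF p.2 ≠ ⊥ ∧ (Face 0 p.2).Nonempty
      · have hTp : T p = {c | c - (μβ p.1 - h.2.choose) ∈
            (ann (tβ p.1) ⊔ ann (tF p.2) : Submodule ℝ (Fin k → ℝ))} := by
          simp only [hT]
          rw [dif_pos h]
        set d := μβ p.1 - h.2.choose with hd
        set W : Submodule ℝ (Fin k → ℝ) := ann (tβ p.1) ⊔ ann (tF p.2) with hW
        have hWt : W ≠ ⊤ := fun ht => h.1 ((key _ _).1 ht)
        have hpre : T p = (Homeomorph.subRight d) ⁻¹' (W : Set (Fin k → ℝ)) := hTp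
        have hWint : interior (W : Set (Fin k → ℝ)) = ∅ := by
          by_contra hne
          exact hWt (Submodule.eq_top_of_nonempty_interior' W
            (Set.nonempty_iff_ne_empty.2 fun hh => hne (by rw [hh])))
        constructor
        · rw [hpre]
          exact (Submodule.closed_of_finiteDimensional W).preimage
            (Homeomorph.subRight d).continuous
        · rw [hpre, ← Homeomorph.preimage_interior, hWint, Set.preimage_empty]
      · have hTp : T p = ∅ := by
          simp only [hT]
          rw [dif_neg h]
        rw [hTp]
        exact ⟨isClosed_empty, interior_empty⟩
    have hBT : B ⊆ ⋃ p, T p := by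
      rintro c ⟨β, I, ⟨x, hxV, hxF⟩, hbad⟩
      have hF0 : (Face 0 I).Nonempty := ⟨x - c, (hFaceSub c I x).1 hxF⟩
      refine Set.mem_iUnion.2 ⟨(β, I), ?_⟩
      have hTp : T (β, I) = {c | c - (μβ β - (⟨hbad, hF0⟩ :
          tβ β ⊓ tF I ≠ ⊥ ∧ (Face 0 I).Nonempty).2.choose) ∈
          (ann (tβ β) ⊔ ann (tF I) : Submodule ℝ (Fin k → ℝ))} := by
        simp only [hT]
        rw [dif_pos ⟨hbad, hF0⟩]
      rw [hTp]
      set μ₀ := (⟨hbad, hF0⟩ :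
          tβ β ⊓ tF I ≠ ⊥ ∧ (Face 0 I).Nonempty).2.choose with hμ₀def
      have hμ₀ : μ₀ ∈ Face 0 I := Exists.choose_spec hF0
      have ha : x - μβ β ∈ ann (tβ β) := haff β x hxV
      have hb : (x - c) - μ₀ ∈ ann (tF I) := by
        rw [hmem_tF]
        intro i hi
        have hxc : x - c ∈ Face 0 I := (hFaceSub c I x).1 hxF
        have h1 : L i (x - c) = r i + L i 0 := ((memFace _ _ _).1 hxc).1 i hi
        have h2 : L i μ₀ = r i + L i 0 := ((memFace _ _ _).1 hμ₀).1 i hi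
        have h3 : L i ((x - c) - μ₀) = 0 := by
          rw [hLsub, h1, h2]; ring
        rw [← h3]
        exact Finset.sum_congr rfl fun j _ => mul_comm _ _
      have hcd : c - (μβ β - μ₀) = (x - μβ β) - ((x - c) - μ₀) := by
        abel
      show c - (μβ β - μ₀) ∈ (ann (tβ β) ⊔ ann (tF I) : Submodule ℝ (Fin k → ℝ))
      rw [hcd]
      exact Submodule.sub_mem _ (Submodule.mem_sup_left ha) (Submodule.mem_sup_right hb)
    have hdense2 : Dense (⋂ p, (T p)ᶜ) :=
      dense_iInter_of_isOpen (fun p => (hTprop p).1.isOpen_compl)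
        (fun p => interior_eq_empty_iff_dense_compl.1 (hTprop p).2)
    refine hdense2.mono ?_
    rw [← Set.compl_iUnion]
    exact Set.compl_subset_compl.2 hBT
  refine ⟨?_, ?_, hDense⟩
  · rw [hAdm 0]
    constructor
    · intro h β I hne
      exact (key _ _).2 (h β I hne)
    · intro h β I hne
      exact (key _ _).1 (h β I hne)
  · rw [hAdmB]
    exact hBclosed.isOpen_compl
end
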